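/- arXiv:hep-th/9412059 — 8 statements merged into one kernel-verified Lean document; each statement's English description precedes it below -/
import Mathlib

section
/- For every g ∈ SL(2,ℂ) there exists a unique real 4×4 matrix λ_g (rows and columns indexed by 0,1,2,3) such that Σ_{i=0}^{3} (λ_g x)_i σ_i = g (Σ_{j=0}^{3} x_j σ_j) g* for all x ∈ ℝ⁴ (g* the conjugate transpose of g); moreover this matrix satisfies λ_gᵀ η λ_g = η, det(λ_g) = 1, and (λ_g)_{00} ≥ 1 (i.e. λ_g belongs to the proper orthochronous Lorentz group SO₀(1,3)). -/
open Matrix Complex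

noncomputable section

/-- The Pauli matrices σ₀, σ₁, σ₂, σ₃. -/
def pauli : Fin 4 → Matrix (Fin 2) (Fin 2) ℂ :=
  ![!![1, 0; 0, 1], !![0, 1; 1, 0], !![0, -I; I, 0], !![1, 0; 0, -1]]

/-- The Minkowski metric η = diag(1,-1,-1,-1). -/
def minkEta : Matrix (Fin 4) (Fin 4) ℝ :=
  !![1, 0, 0, 0; 0, -1, 0, 0; 0, 0, -1, 0; 0, 0, 0, -1]

/-- `Λ` is the matrix λ_g associated with `g`:
`Σ_i (Λ x)_i σ_i = g (Σ_j x_j σ_j) g*` for all `x ∈ ℝ⁴`. -/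
def IsLorentzPair (g : Matrix (Fin 2) (Fin 2) ℂ) (Λ : Matrix (Fin 4) (Fin 4) ℝ) : Prop :=
  ∀ x : Fin 4 → ℝ,
    ∑ i, ((Λ.mulVec x i : ℝ) : ℂ) • pauli i
      = g * (∑ j, ((x j : ℝ) : ℂ) • pauli j) * gᴴ

/-!
Identify `x ∈ ℝ⁴` with the Hermitian matrix `X = Σ xᵢ σᵢ`: this is a real-linear bijection onto
the Hermitian matrices, and `det X = xᵀ η x`. Since `g X g*` is again Hermitian, it is `Σ yᵢ σᵢ`
for a unique `y`, depending linearly on `x`; this gives existence and uniqueness of `λ_g`.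
Taking determinants, `λ_g` preserves the Minkowski form, so `λ_gᵀ η λ_g = η` by polarization, and
`(λ_g)₀₀ = ½ tr (g g*) ≥ |det g| = 1`. For the determinant: `g ↦ λ_g` is multiplicative and
even, and every `g ∈ SL(2,ℂ)` is `±h²` with `h = (g + 1) / √(tr g + 2) ∈ SL(2,ℂ)` (replacing `g`
by `-g` if `tr g = -2`), so `det λ_g = (det λ_h)² = 1` because `det λ_h = ±1`.
-/

theorem Matrix.eq_of_isSymm_of_dotProduct_mulVec_self_eq {n K : Type*} [Fintype n]
    [DecidableEq n] [Field K] [NeZero (2 : K)] {A B : Matrix n n K}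
    (hA : A.IsSymm) (hB : B.IsSymm) (h : ∀ x, x ⬝ᵥ A *ᵥ x = x ⬝ᵥ B *ᵥ x) : A = B :=
  Matrix.toBilin'.injective <|
    LinearMap.BilinForm.ext_of_isSymm (isSymm_toBilin'_iff_isSymm.2 hA)
      (isSymm_toBilin'_iff_isSymm.2 hB) fun x => by simpa only [toBilin'_apply'] using h x

theorem Matrix.det_mul_self_eq_one_of_transpose_mul_mul_self {n K : Type*} [Fintype n]
    [DecidableEq n] [Field K] {Λ η : Matrix n n K} (hη : η.det ≠ 0) (h : Λᵀ * η * Λ = η) :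
    Λ.det * Λ.det = 1 := by
  have := congrArg det h
  rw [det_mul, det_mul, det_transpose] at this
  exact mul_right_cancel₀ hη (by linear_combination this)

theorem Matrix.mul_self_fin_two {R : Type*} [CommRing R] (g : Matrix (Fin 2) (Fin 2) R) :
    g * g = g.trace • g - g.det • 1 := by
  ext i j
  fin_cases i <;> fin_cases j <;>
    simp [mul_apply, trace_fin_two, det_fin_two, Fin.sum_univ_two] <;> ring

theorem Matrix.det_add_one_fin_two {R : Type*} [CommRing R] (g : Matrix (Fin 2) (Fin 2) R) :
    (g + 1).det = g.det + g.trace + 1 := by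
  rw [det_fin_two, det_fin_two, trace_fin_two]
  simp only [Matrix.add_apply, one_apply_eq, one_apply_ne zero_ne_one, one_apply_ne one_ne_zero]
  ring

theorem Matrix.exists_mul_self_eq_of_trace_ne {K : Type*} [Field K] [IsAlgClosed K]
    {g : Matrix (Fin 2) (Fin 2) K} (hg : g.det = 1) (ht : g.trace ≠ -2) :
    ∃ h : Matrix (Fin 2) (Fin 2) K, h.det = 1 ∧ h * h = g := by
  obtain ⟨s, hs⟩ := IsAlgClosed.exists_eq_mul_self (g.trace + 2)
  have hs0 : s * s ≠ 0 := hs ▸ fun h => ht (eq_neg_of_add_eq_zero_left h)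
  have hdet : (g + 1).det = s * s := by rw [det_add_one_fin_two, hg, ← hs]; ring
  refine ⟨s⁻¹ • (g + 1), ?_, ?_⟩
  · rw [det_smul, hdet, Fintype.card_fin, inv_pow, sq, inv_mul_cancel₀ hs0]
  -- Cayley–Hamilton `g * g = tr g • g - 1` turns `(g + 1) * (g + 1)` into `(tr g + 2) • g`.
  · calc s⁻¹ • (g + 1) * s⁻¹ • (g + 1) = (s * s)⁻¹ • ((g + 1) * (g + 1)) := by
          rw [smul_mul_smul_comm, mul_inv]
      _ = (s * s)⁻¹ • ((s * s) • g) := by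
          rw [← hs]
          simp only [add_mul, mul_add, mul_one, one_mul, mul_self_fin_two, hg]
          module
      _ = g := inv_smul_smul₀ hs0 g

theorem Matrix.exists_mul_self_eq_or_neg {K : Type*} [Field K] [IsAlgClosed K] [NeZero (2 : K)]
    {g : Matrix (Fin 2) (Fin 2) K} (hg : g.det = 1) :
    ∃ h : Matrix (Fin 2) (Fin 2) K, h.det = 1 ∧ (h * h = g ∨ h * h = -g) := by
  by_cases ht : g.trace = -2
  · have hdet : (-g).det = 1 := by simp [det_neg, hg]
    have htr : (-g).trace ≠ -2 := by
      rw [trace_neg, ht, neg_neg]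
      exact fun h => two_ne_zero (mul_self_eq_zero.1 (by linear_combination h : (2 : K) * 2 = 0))
    obtain ⟨h, hdet, hsq⟩ := exists_mul_self_eq_of_trace_ne hdet htr
    exact ⟨h, hdet, Or.inr hsq⟩
  · obtain ⟨h, hdet, hsq⟩ := exists_mul_self_eq_of_trace_ne hg ht
    exact ⟨h, hdet, Or.inl hsq⟩

theorem Matrix.two_mul_norm_det_le_re_trace_mul_conjTranspose (g : Matrix (Fin 2) (Fin 2) ℂ) :
    2 * ‖g.det‖ ≤ (g * gᴴ).trace.re := by
  have htr : (g * gᴴ).trace.re = ‖g 0 0‖ ^ 2 + ‖g 0 1‖ ^ 2 + ‖g 1 0‖ ^ 2 + ‖g 1 1‖ ^ 2 := by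
    simp only [trace_fin_two, mul_apply, Fin.sum_univ_two, conjTranspose_apply, RCLike.star_def,
      add_re, mul_conj', ← ofReal_pow, ofReal_re]
    ring
  have hdet : ‖g.det‖ ≤ ‖g 0 0‖ * ‖g 1 1‖ + ‖g 0 1‖ * ‖g 1 0‖ := by
    rw [det_fin_two, ← norm_mul, ← norm_mul]
    exact norm_sub_le _ _
  nlinarith [sq_nonneg (‖g 0 0‖ - ‖g 1 1‖), sq_nonneg (‖g 0 1‖ - ‖g 1 0‖)]

def pauliSum : (Fin 4 → ℝ) →ₗ[ℝ] Matrix (Fin 2) (Fin 2) ℂ :=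
  Fintype.linearCombination ℝ pauli

theorem pauliSum_apply (x : Fin 4 → ℝ) : pauliSum x = ∑ i, ((x i : ℝ) : ℂ) • pauli i := by
  simp only [pauliSum, Fintype.linearCombination_apply, coe_smul]

theorem pauliSum_eq (x : Fin 4 → ℝ) :
    pauliSum x = !![(x 0 + x 3 : ℂ), x 1 - x 2 * I; x 1 + x 2 * I, x 0 - x 3] := by
  ext i j
  fin_cases i <;> fin_cases j <;> simp [pauliSum_apply, pauli, Fin.sum_univ_four] <;> ring

theorem pauliSum_single_zero : pauliSum (Pi.single 0 1) = 1 := by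
  rw [pauliSum_eq]
  ext i j
  fin_cases i <;> fin_cases j <;> simp

def pauliCoord (H : Matrix (Fin 2) (Fin 2) ℂ) : Fin 4 → ℝ :=
  ![(H 0 0 + H 1 1).re / 2, (H 1 0).re, (H 1 0).im, (H 0 0 - H 1 1).re / 2]

theorem pauliCoord_pauliSum (x : Fin 4 → ℝ) : pauliCoord (pauliSum x) = x := by
  rw [pauliSum_eq]
  funext i
  fin_cases i <;> simp [pauliCoord]

theorem pauliSum_injective : Function.Injective pauliSum :=
  Function.LeftInverse.injective pauliCoord_pauliSum

theorem pauliSum_pauliCoord {H : Matrix (Fin 2) (Fin 2) ℂ} (hH : H.IsHermitian) :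
    pauliSum (pauliCoord H) = H := by
  have h01 : H 0 1 = star (H 1 0) := (hH.apply 0 1).symm
  have h00 : (H 0 0).im = 0 := conj_eq_iff_im.1 (hH.apply 0 0)
  have h11 : (H 1 1).im = 0 := conj_eq_iff_im.1 (hH.apply 1 1)
  rw [pauliSum_eq]
  ext i j
  fin_cases i <;> fin_cases j <;> simp [pauliCoord, Complex.ext_iff, h01, h00, h11] <;> ring

theorem isHermitian_pauli (i : Fin 4) : (pauli i).IsHermitian := by
  fin_cases i <;> ext a b <;> fin_cases a <;> fin_cases b <;> simp [pauli]

theorem dotProduct_minkEta_mulVec (x : Fin 4 → ℝ) :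
    x ⬝ᵥ minkEta *ᵥ x = x 0 * x 0 - x 1 * x 1 - x 2 * x 2 - x 3 * x 3 := by
  simp [minkEta, dotProduct, mulVec, Fin.sum_univ_four]
  ring

theorem det_pauliSum (x : Fin 4 → ℝ) : (pauliSum x).det = ((x ⬝ᵥ minkEta *ᵥ x : ℝ) : ℂ) := by
  rw [pauliSum_eq, det_fin_two_of, dotProduct_minkEta_mulVec]
  push_cast
  linear_combination (x 2 : ℂ) ^ 2 * I_sq

theorem isSymm_minkEta : minkEta.IsSymm := by
  ext i j
  fin_cases i <;> fin_cases j <;> rfl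

theorem det_minkEta_ne_zero : minkEta.det ≠ 0 := by
  simp [minkEta, det_succ_row_zero, Fin.sum_univ_succ]

theorem isLorentzPair_iff {g : Matrix (Fin 2) (Fin 2) ℂ} {Λ : Matrix (Fin 4) (Fin 4) ℝ} :
    IsLorentzPair g Λ ↔ ∀ x, pauliSum (Λ *ᵥ x) = g * pauliSum x * gᴴ := by
  simp only [IsLorentzPair, pauliSum_apply]

def lorentzMatrix (g : Matrix (Fin 2) (Fin 2) ℂ) : Matrix (Fin 4) (Fin 4) ℝ :=
  Matrix.of fun i j => pauliCoord (g * pauli j * gᴴ) i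

theorem isLorentzPair_lorentzMatrix (g : Matrix (Fin 2) (Fin 2) ℂ) :
    IsLorentzPair g (lorentzMatrix g) := by
  have hcol (j : Fin 4) : pauliSum ((lorentzMatrix g)ᵀ j) = g * pauli j * gᴴ :=
    pauliSum_pauliCoord (isHermitian_mul_mul_conjTranspose g (isHermitian_pauli j))
  refine isLorentzPair_iff.2 fun x => ?_
  rw [mulVec_eq_sum, map_sum]
  simp only [op_smul_eq_smul, map_smul, hcol, pauliSum_apply, ← coe_smul, Matrix.sum_mul,
    Matrix.mul_sum, Matrix.smul_mul, Matrix.mul_smul]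

namespace IsLorentzPair

variable {g h : Matrix (Fin 2) (Fin 2) ℂ} {Λ M : Matrix (Fin 4) (Fin 4) ℝ}

theorem unique (hΛ : IsLorentzPair g Λ) (hM : IsLorentzPair g M) : Λ = M :=
  ext_iff_mulVec.2 fun x =>
    pauliSum_injective ((isLorentzPair_iff.1 hΛ x).trans (isLorentzPair_iff.1 hM x).symm)

theorem mul (hΛ : IsLorentzPair g Λ) (hM : IsLorentzPair h M) : IsLorentzPair (g * h) (Λ * M) :=
  isLorentzPair_iff.2 fun x => by
    rw [← mulVec_mulVec, isLorentzPair_iff.1 hΛ, isLorentzPair_iff.1 hM, conjTranspose_mul]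
    simp only [Matrix.mul_assoc]

theorem neg (hΛ : IsLorentzPair g Λ) : IsLorentzPair (-g) Λ :=
  isLorentzPair_iff.2 fun x => by
    rw [conjTranspose_neg, neg_mul, mul_neg, neg_mul, neg_neg, isLorentzPair_iff.1 hΛ]

theorem dotProduct_minkEta_mulVec_mulVec (hg : g.det = 1) (hΛ : IsLorentzPair g Λ)
    (x : Fin 4 → ℝ) : Λ *ᵥ x ⬝ᵥ minkEta *ᵥ (Λ *ᵥ x) = x ⬝ᵥ minkEta *ᵥ x := by
  have := congrArg det (isLorentzPair_iff.1 hΛ x)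
  rw [det_mul, det_mul, det_conjTranspose, det_pauliSum, det_pauliSum, hg] at this
  simpa using this

theorem transpose_mul_minkEta_mul_self (hg : g.det = 1) (hΛ : IsLorentzPair g Λ) :
    Λᵀ * minkEta * Λ = minkEta := by
  refine eq_of_isSymm_of_dotProduct_mulVec_self_eq ?_ isSymm_minkEta fun x => ?_
  · simp only [IsSymm, Matrix.mul_assoc, transpose_mul, isSymm_minkEta.eq, transpose_transpose]
  · rw [← mulVec_mulVec, ← mulVec_mulVec, dotProduct_mulVec, vecMul_transpose,
      dotProduct_minkEta_mulVec_mulVec hg hΛ]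

theorem apply_zero_zero (hΛ : IsLorentzPair g Λ) : Λ 0 0 = (g * gᴴ).trace.re / 2 := by
  have hcol : pauliSum (Λ.col 0) = g * gᴴ := by
    simpa [mulVec_single_one, pauliSum_single_zero] using isLorentzPair_iff.1 hΛ (Pi.single 0 1)
  rw [← hcol, pauliSum_eq, trace_fin_two_of]
  simp

theorem one_le_apply_zero_zero (hg : g.det = 1) (hΛ : IsLorentzPair g Λ) : 1 ≤ Λ 0 0 := by
  have := g.two_mul_norm_det_le_re_trace_mul_conjTranspose
  rw [hg, norm_one] at this
  linarith [hΛ.apply_zero_zero]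

theorem det_eq_one (hg : g.det = 1) (hΛ : IsLorentzPair g Λ) : Λ.det = 1 := by
  obtain ⟨h, hh, hsq⟩ := exists_mul_self_eq_or_neg hg
  have hM := isLorentzPair_lorentzMatrix h
  have hsq' : IsLorentzPair g (lorentzMatrix h * lorentzMatrix h) := by
    rcases hsq with rfl | hneg
    · exact hM.mul hM
    · simpa [hneg] using (hM.mul hM).neg
  rw [hΛ.unique hsq', det_mul]
  exact det_mul_self_eq_one_of_transpose_mul_mul_self det_minkEta_ne_zero
    (transpose_mul_minkEta_mul_self hh hM)

end IsLorentzPair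

/-- For every `g ∈ SL(2,ℂ)` there is a unique real 4×4 matrix `λ_g` with
`Σ_i (λ_g x)_i σ_i = g (Σ_j x_j σ_j) g*` for all `x`, and it belongs to the proper
orthochronous Lorentz group: `λ_gᵀ η λ_g = η`, `det λ_g = 1`, `(λ_g)₀₀ ≥ 1`. -/
theorem lorentz_matrix_exists_unique (g : Matrix (Fin 2) (Fin 2) ℂ) (hg : g.det = 1) :
    (∃! Λ : Matrix (Fin 4) (Fin 4) ℝ, IsLorentzPair g Λ) ∧
    ∀ Λ : Matrix (Fin 4) (Fin 4) ℝ, IsLorentzPair g Λ →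
      Λᵀ * minkEta * Λ = minkEta ∧ Λ.det = 1 ∧ 1 ≤ Λ 0 0 := by
  refine ⟨⟨lorentzMatrix g, isLorentzPair_lorentzMatrix g,
    fun _ hΛ => hΛ.unique (isLorentzPair_lorentzMatrix g)⟩, fun _ hΛ => ?_⟩
  exact ⟨hΛ.transpose_mul_minkEta_mul_self hg, hΛ.det_eq_one hg, hΛ.one_le_apply_zero_zero hg⟩
end
end

section
/- The homomorphism g ↦ λ_g is two-to-one: for g,h ∈ SL(2,ℂ) one has λ_g = λ_h if and only if g = h or g = -h; in particular λ_g is the 4×4 identity matrix if and only if g = 1₂ or g = -1₂. -/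
open Matrix Complex

noncomputable section

lemma pauli_zero : pauli 0 = 1 := by
  simp only [pauli]
  ext i j
  fin_cases i <;> fin_cases j <;> simp [Matrix.one_apply]

lemma pauli_sum_inj (c d : Fin 4 → ℝ)
    (h : ∑ i, ((c i : ℝ) : ℂ) • pauli i = ∑ i, ((d i : ℝ) : ℂ) • pauli i) : c = d := by
  have h00 := congrFun (congrFun h 0) 0
  have h01 := congrFun (congrFun h 0) 1
  have h10 := congrFun (congrFun h 1) 0
  have h11 := congrFun (congrFun h 1) 1
  simp [pauli, Fin.sum_univ_four, Matrix.sum_apply] at h00 h01 h10 h11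
  have r00 := congrArg Complex.re h00
  have r11 := congrArg Complex.re h11
  have r10 := congrArg Complex.re h10
  have i10 := congrArg Complex.im h10
  simp at r00 r11 r10 i10
  funext i
  fin_cases i <;> simp <;> linarith

lemma key (g h : Matrix (Fin 2) (Fin 2) ℂ) (hg : g.det = 1) (hh : h.det = 1)
    (Λ : Matrix (Fin 4) (Fin 4) ℝ)
    (hΛg : IsLorentzPair g Λ) (hΛh : IsLorentzPair h Λ) : g = h ∨ g = -h := by
  have hhu : IsUnit h.det := by rw [hh]; exact isUnit_one
  have hhu' : IsUnit hᴴ.det := by rw [Matrix.det_conjTranspose, hh]; simp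
  have hp : ∀ j, g * pauli j * gᴴ = h * pauli j * hᴴ := by
    intro j
    have e1 := hΛg (Pi.single j 1)
    have e2 := hΛh (Pi.single j 1)
    have hS : (∑ j', (((Pi.single j 1 : Fin 4 → ℝ) j' : ℝ) : ℂ) • pauli j') = pauli j := by
      rw [Finset.sum_eq_single j] <;> simp +contextual [Pi.single_apply]
    rw [hS] at e1 e2
    rw [← e1, ← e2]
  set k := h⁻¹ * g with hk
  have hgk : g = h * k := by
    rw [hk, ← Matrix.mul_assoc, Matrix.mul_nonsing_inv h hhu, Matrix.one_mul]
  have hkp : ∀ j, k * pauli j * kᴴ = pauli j := by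
    intro j
    have : kᴴ = gᴴ * (hᴴ)⁻¹ := by
      rw [hk, Matrix.conjTranspose_mul, Matrix.conjTranspose_nonsing_inv]
    rw [this, hk]
    calc h⁻¹ * g * pauli j * (gᴴ * (hᴴ)⁻¹)
        = h⁻¹ * (g * pauli j * gᴴ) * (hᴴ)⁻¹ := by
          simp only [Matrix.mul_assoc]
      _ = h⁻¹ * (h * pauli j * hᴴ) * (hᴴ)⁻¹ := by rw [hp]
      _ = pauli j := by
          simp only [← Matrix.mul_assoc]
          rw [Matrix.nonsing_inv_mul h hhu, Matrix.one_mul, Matrix.mul_assoc,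
            Matrix.mul_nonsing_inv hᴴ hhu', Matrix.mul_one]
  have hdetk : k.det = 1 := by
    rw [hk, Matrix.det_mul, Matrix.det_nonsing_inv, hg, hh]; simp
  have hku : IsUnit k.det := by rw [hdetk]; exact isUnit_one
  have hkk : k * kᴴ = 1 := by
    have := hkp 0
    rwa [pauli_zero, Matrix.mul_one] at this
  have hkH : kᴴ = k⁻¹ := by
    rw [Matrix.inv_eq_right_inv hkk]
  have hcomm : ∀ j, k * pauli j = pauli j * k := by
    intro j
    have := hkp j
    rw [hkH] at this
    have := congrArg (· * k) this
    simpa [Matrix.mul_assoc, Matrix.nonsing_inv_mul k hku] using this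
  have h1 := hcomm 1
  have h3 := hcomm 3
  -- extract entries
  have e01 : k 0 1 = 0 := by
    have := congrFun (congrFun h3 0) 1
    simp [pauli, Matrix.mul_apply, Fin.sum_univ_two] at this
    linear_combination -this / 2
  have e10 : k 1 0 = 0 := by
    have := congrFun (congrFun h3 1) 0
    simp [pauli, Matrix.mul_apply, Fin.sum_univ_two] at this
    linear_combination this / 2
  have e00 : k 0 0 = k 1 1 := by
    have := congrFun (congrFun h1 0) 1
    simpa [pauli, Matrix.mul_apply, Fin.sum_univ_two] using this
  have hdet2 : k 0 0 * k 1 1 - k 0 1 * k 1 0 = 1 := by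
    rw [← Matrix.det_fin_two k]; exact hdetk
  rw [e01, e10, ← e00] at hdet2
  simp at hdet2
  have ha : k 0 0 = 1 ∨ k 0 0 = -1 := mul_self_eq_one_iff.mp hdet2
  have hkform : ∀ a : ℂ, k 0 0 = a → k = a • (1 : Matrix (Fin 2) (Fin 2) ℂ) := by
    intro a haa
    ext i j
    fin_cases i <;> fin_cases j <;>
      simp [Matrix.one_apply, e01, e10, ← e00, haa.symm]
  rcases ha with ha | ha
  · left
    rw [hgk, hkform 1 ha]
    simp
  · right
    rw [hgk, hkform (-1) ha]
    simp


lemma conv (g h : Matrix (Fin 2) (Fin 2) ℂ)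
    (Λg Λh : Matrix (Fin 4) (Fin 4) ℝ)
    (hΛg : IsLorentzPair g Λg) (hΛh : IsLorentzPair h Λh)
    (hgh : g = h ∨ g = -h) : Λg = Λh := by
  have hsame : ∀ x : Fin 4 → ℝ, Λg.mulVec x = Λh.mulVec x := by
    intro x
    apply pauli_sum_inj
    rw [hΛg x, hΛh x]
    rcases hgh with rfl | rfl
    · rfl
    · simp [Matrix.conjTranspose_neg, Matrix.neg_mul, Matrix.mul_neg]
  ext i j
  have := congrFun (hsame (Pi.single j 1)) i
  simpa using this

lemma one_pair : IsLorentzPair 1 1 := by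
  intro x
  simp

/-- The homomorphism g ↦ λ_g is two-to-one: λ_g = λ_h iff g = ±h;
in particular λ_g = 1 iff g = ±1₂. -/
theorem lambda_two_to_one (g h : Matrix (Fin 2) (Fin 2) ℂ)
    (hg : g.det = 1) (hh : h.det = 1)
    (Λg Λh : Matrix (Fin 4) (Fin 4) ℝ)
    (hΛg : IsLorentzPair g Λg) (hΛh : IsLorentzPair h Λh) :
    (Λg = Λh ↔ (g = h ∨ g = -h)) ∧
    (Λg = 1 ↔ (g = 1 ∨ g = -1)) := by
  constructor
  · constructor
    · intro hE
      exact key g h hg hh Λg hΛg (hE ▸ hΛh)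
    · exact conv g h Λg Λh hΛg hΛh
  · constructor
    · intro hE
      exact key g 1 hg (by simp) Λg hΛg (hE ▸ one_pair)
    · intro hgh
      exact conv g 1 Λg 1 hΛg one_pair hgh
end
end

section
/- The matrix V satisfies: (i) its entrywise complex conjugate equals τV, i.e. conj(V_{(A,B),i}) = V_{(B,A),i} for all A,B ∈ {1,2}, i ∈ {0,1,2,3}; (ii) V is invertible; and (iii) for every g ∈ M₂(ℂ), every entry of the 4×4 matrix V⁻¹ (g ⊗ conj(g)) V is real, where conj(g) is the entrywise complex conjugate of g and ⊗ is the Kronecker product. -/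
open Matrix Complex

noncomputable section

/-- Kronecker product of `Fin`-indexed matrices, with the standard (lexicographic)
Kronecker ordering of indices. -/
def kron {m n p q : ℕ} (A : Matrix (Fin m) (Fin n) ℂ) (B : Matrix (Fin p) (Fin q) ℂ) :
    Matrix (Fin (m * p)) (Fin (n * q)) ℂ :=
  Matrix.of fun i j => A i.divNat j.divNat * B i.modNat j.modNat

/-- The matrix `V` with `V_{(A,B),i} = (σ_i)_{AB}`, rows ordered (1,1),(1,2),(2,1),(2,2). -/
def Vmat : Matrix (Fin 4) (Fin 4) ℂ :=
  !![1, 0, 0, 1; 0, 1, -I, 0; 0, 1, I, 0; 1, 0, 0, -1]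

/-- The flip matrix τ on ℂ²⊗ℂ² ≅ ℂ⁴ determined by τ(u⊗v) = v⊗u. -/
def tau4 : Matrix (Fin 4) (Fin 4) ℂ :=
  !![1, 0, 0, 0; 0, 0, 1, 0; 0, 1, 0, 0; 0, 0, 0, 1]

/-! The columns of `V` are the Pauli matrices, which are orthogonal for the trace inner
product, so `Vᴴ V = 2` and `V` is invertible. For (iii), conjugating `N = V⁻¹ (g ⊗ ḡ) V`
entrywise gives `(τV)⁻¹ (ḡ ⊗ g) (τV) = V⁻¹ τ (ḡ ⊗ g) τ V = N`, since `τ² = 1` and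
`τ (A ⊗ B) τ = B ⊗ A`; a matrix equal to its entrywise conjugate is real. -/

section ConjugationInvariance

variable {α n : Type*} [CommRing α] [StarRing α] [Fintype n] [DecidableEq n]

theorem Matrix.map_starRingEnd_nonsing_inv (A : Matrix n n α) :
    A⁻¹.map (starRingEnd α) = (A.map (starRingEnd α))⁻¹ := by
  have hstar : ∀ B : Matrix n n α, B.map (starRingEnd α) = Bᴴᵀ := fun B => by
    ext; exact starRingEnd_apply _
  rw [hstar, hstar, conjTranspose_nonsing_inv, transpose_nonsing_inv]

theorem map_starRingEnd_inv_mul_mul_eq_self {V τ M : Matrix n n α}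
    (hV : V.map (starRingEnd α) = τ * V) (hτ : τ * τ = 1)
    (hM : τ * M.map (starRingEnd α) * τ = M) :
    (V⁻¹ * M * V).map (starRingEnd α) = V⁻¹ * M * V := by
  rw [Matrix.map_mul, Matrix.map_mul, Matrix.map_starRingEnd_nonsing_inv, hV, Matrix.mul_inv_rev,
    inv_eq_left_inv hτ]
  conv_rhs => rw [← hM]
  simp only [Matrix.mul_assoc]

end ConjugationInvariance

theorem kron_map {m n p q : ℕ} (f : ℂ →+* ℂ) (A : Matrix (Fin m) (Fin n) ℂ)
    (B : Matrix (Fin p) (Fin q) ℂ) : (kron A B).map f = kron (A.map f) (B.map f) := by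
  ext; simp [kron]

theorem kron_fin_two (A B : Matrix (Fin 2) (Fin 2) ℂ) :
    (kron A B : Matrix (Fin 4) (Fin 4) ℂ) =
      !![A 0 0 * B 0 0, A 0 0 * B 0 1, A 0 1 * B 0 0, A 0 1 * B 0 1;
         A 0 0 * B 1 0, A 0 0 * B 1 1, A 0 1 * B 1 0, A 0 1 * B 1 1;
         A 1 0 * B 0 0, A 1 0 * B 0 1, A 1 1 * B 0 0, A 1 1 * B 0 1;
         A 1 0 * B 1 0, A 1 0 * B 1 1, A 1 1 * B 1 0, A 1 1 * B 1 1] := by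
  ext i j
  fin_cases i <;> fin_cases j <;> rfl

theorem tau4_mul_self : tau4 * tau4 = 1 := by
  ext i j
  fin_cases i <;> fin_cases j <;> simp [tau4, mul_apply, Fin.sum_univ_four]

theorem tau4_mul_kron_mul_tau4 (A B : Matrix (Fin 2) (Fin 2) ℂ) :
    tau4 * kron A B * tau4 = kron B A := by
  rw [kron_fin_two, kron_fin_two]
  ext i j
  fin_cases i <;> fin_cases j <;> simp [tau4, mul_apply, Fin.sum_univ_four, mul_comm]

theorem Vmat_map_starRingEnd : Vmat.map (starRingEnd ℂ) = tau4 * Vmat := by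
  ext i j
  fin_cases i <;> fin_cases j <;> simp [Vmat, tau4, mul_apply, Fin.sum_univ_four]

theorem conjTranspose_Vmat_mul_Vmat : Vmatᴴ * Vmat = 2 := by
  ext i j
  fin_cases i <;> fin_cases j <;>
    simp [Vmat, mul_apply, Fin.sum_univ_four, ofNat_apply] <;> norm_num

theorem isUnit_Vmat : IsUnit Vmat := by
  refine IsUnit.of_mul_eq_one ((2⁻¹ : ℂ) • Vmatᴴ) (mul_eq_one_comm.mp ?_)
  rw [Matrix.smul_mul, conjTranspose_Vmat_mul_Vmat]
  ext i j
  simp [ofNat_apply, one_apply]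

/-- `V` satisfies: (i) `conj V = τ V`; (ii) `V` is invertible; and (iii) all entries of
`V⁻¹ (g ⊗ conj g) V` are real, for every 2×2 complex matrix `g`. -/
theorem Vmat_properties :
    Vmat.map (starRingEnd ℂ) = tau4 * Vmat ∧
    IsUnit Vmat ∧
    ∀ g : Matrix (Fin 2) (Fin 2) ℂ, ∀ i j : Fin 4,
      ((Vmat⁻¹ * (kron g (g.map (starRingEnd ℂ)) : Matrix (Fin 4) (Fin 4) ℂ) * Vmat) i j).im
        = 0 := by
  refine ⟨Vmat_map_starRingEnd, isUnit_Vmat, fun g i j => ?_⟩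
  have hflip : tau4 * (kron g (g.map (starRingEnd ℂ))).map (starRingEnd ℂ) * tau4 =
      kron g (g.map (starRingEnd ℂ)) := by
    rw [kron_map, tau4_mul_kron_mul_tau4]
    congr 1
    ext
    simp
  have hreal := map_starRingEnd_inv_mul_mul_eq_self Vmat_map_starRingEnd tau4_mul_self hflip
  exact conj_eq_iff_im.mp (congrFun₂ hreal i j)
end
end

section
/- Let 0 < t ≤ 1 and X = τ·diag(t⁻¹, t, t, t⁻¹) (a 4×4 matrix). Then: (i) (X ⊗ 1₂)(1₂ ⊗ X)(E ⊗ 1₂) = 1₂ ⊗ E (an equality of 8×2 matrices); (ii) (1₂ ⊗ E')(X ⊗ 1₂)(1₂ ⊗ X) = E' ⊗ 1₂ (an equality of 2×8 matrices); and (iii) τ·conj(X)·τ = X, where conj(X) is the entrywise complex conjugate. -/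
open Matrix Complex

noncomputable section

/-- E = e₁⊗e₂ - e₂⊗e₁ as a column vector. -/
def Evec : Matrix (Fin 4) (Fin 1) ℂ := !![0; 1; -1; 0]

/-- E' = -e¹⊗e² + e²⊗e¹ as a row vector. -/
def Evec' : Matrix (Fin 1) (Fin 4) ℂ := !![0, -1, 1, 0]

/-- 2×2 identity matrix. -/
def one2 : Matrix (Fin 2) (Fin 2) ℂ := 1

/-- `X = τ·diag(t⁻¹, t, t, t⁻¹)`. -/
def Xq (t : ℝ) : Matrix (Fin 4) (Fin 4) ℂ :=
  tau4 * Matrix.diagonal ![(t : ℂ)⁻¹, (t : ℂ), (t : ℂ), (t : ℂ)⁻¹]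

lemma my_v8 (a : ℕ) : ((OfNat.ofNat a : Fin 8) : ℕ) = a % 8 := rfl
lemma my_v2 (a : ℕ) : ((OfNat.ofNat a : Fin 2) : ℕ) = a % 2 := rfl

lemma my_f2_1 : (1 : Fin 2) = Fin.succ (0 : Fin 1) := rfl
lemma my_f3_1 : (1 : Fin 3) = Fin.succ (0 : Fin 2) := rfl
lemma my_f3_2 : (2 : Fin 3) = Fin.succ (1 : Fin 2) := rfl
lemma my_f4_1 : (1 : Fin 4) = Fin.succ (0 : Fin 3) := rfl
lemma my_f4_2 : (2 : Fin 4) = Fin.succ (1 : Fin 3) := rfl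
lemma my_f4_3 : (3 : Fin 4) = Fin.succ (2 : Fin 3) := rfl
lemma my_f5_1 : (1 : Fin 5) = Fin.succ (0 : Fin 4) := rfl
lemma my_f5_2 : (2 : Fin 5) = Fin.succ (1 : Fin 4) := rfl
lemma my_f5_3 : (3 : Fin 5) = Fin.succ (2 : Fin 4) := rfl
lemma my_f5_4 : (4 : Fin 5) = Fin.succ (3 : Fin 4) := rfl
lemma my_f6_1 : (1 : Fin 6) = Fin.succ (0 : Fin 5) := rfl
lemma my_f6_2 : (2 : Fin 6) = Fin.succ (1 : Fin 5) := rfl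
lemma my_f6_3 : (3 : Fin 6) = Fin.succ (2 : Fin 5) := rfl
lemma my_f6_4 : (4 : Fin 6) = Fin.succ (3 : Fin 5) := rfl
lemma my_f6_5 : (5 : Fin 6) = Fin.succ (4 : Fin 5) := rfl
lemma my_f7_1 : (1 : Fin 7) = Fin.succ (0 : Fin 6) := rfl
lemma my_f7_2 : (2 : Fin 7) = Fin.succ (1 : Fin 6) := rfl
lemma my_f7_3 : (3 : Fin 7) = Fin.succ (2 : Fin 6) := rfl
lemma my_f7_4 : (4 : Fin 7) = Fin.succ (3 : Fin 6) := rfl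
lemma my_f7_5 : (5 : Fin 7) = Fin.succ (4 : Fin 6) := rfl
lemma my_f7_6 : (6 : Fin 7) = Fin.succ (5 : Fin 6) := rfl
lemma my_f8_1 : (1 : Fin 8) = Fin.succ (0 : Fin 7) := rfl
lemma my_f8_2 : (2 : Fin 8) = Fin.succ (1 : Fin 7) := rfl
lemma my_f8_3 : (3 : Fin 8) = Fin.succ (2 : Fin 7) := rfl
lemma my_f8_4 : (4 : Fin 8) = Fin.succ (3 : Fin 7) := rfl
lemma my_f8_5 : (5 : Fin 8) = Fin.succ (4 : Fin 7) := rfl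
lemma my_f8_6 : (6 : Fin 8) = Fin.succ (5 : Fin 7) := rfl
lemma my_f8_7 : (7 : Fin 8) = Fin.succ (6 : Fin 7) := rfl

lemma my_cv5 {α : Type*} (a0 a1 a2 a3 a4 a5 a6 a7 : α) : ![a0,a1,a2,a3,a4,a5,a6,a7] 5 = a5 := rfl
lemma my_cv6 {α : Type*} (a0 a1 a2 a3 a4 a5 a6 a7 : α) : ![a0,a1,a2,a3,a4,a5,a6,a7] 6 = a6 := rfl
lemma my_cv7 {α : Type*} (a0 a1 a2 a3 a4 a5 a6 a7 : α) : ![a0,a1,a2,a3,a4,a5,a6,a7] 7 = a7 := rfl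

lemma Xq_eq (t : ℝ) :
    Xq t = !![(t:ℂ)⁻¹,0,0,0; 0,0,(t:ℂ),0; 0,(t:ℂ),0,0; 0,0,0,(t:ℂ)⁻¹] := by
  ext i j
  fin_cases i <;> fin_cases j <;>
    simp [Xq, tau4, Matrix.mul_apply, Fin.sum_univ_succ, Matrix.diagonal, vecHead, vecTail, Matrix.cons_val_succ,
      my_f2_1, my_f3_1, my_f3_2, my_f4_1, my_f4_2, my_f4_3, my_f5_1, my_f5_2, my_f5_3, my_f5_4, my_f6_1, my_f6_2, my_f6_3, my_f6_4, my_f6_5, my_f7_1, my_f7_2, my_f7_3, my_f7_4, my_f7_5, my_f7_6, my_f8_1, my_f8_2, my_f8_3, my_f8_4, my_f8_5, my_f8_6, my_f8_7]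

lemma kron_X1 (t : ℝ) : kron (Xq t) one2 =
    !![(t:ℂ)⁻¹,0,0,0,0,0,0,0;
       0,(t:ℂ)⁻¹,0,0,0,0,0,0;
       0,0,0,0,(t:ℂ),0,0,0;
       0,0,0,0,0,(t:ℂ),0,0;
       0,0,(t:ℂ),0,0,0,0,0;
       0,0,0,(t:ℂ),0,0,0,0;
       0,0,0,0,0,0,(t:ℂ)⁻¹,0;
       0,0,0,0,0,0,0,(t:ℂ)⁻¹] := by
  rw [Xq_eq]
  show (Matrix.of fun (i j : Fin 8) => _) = _
  ext i j
  fin_cases i <;> fin_cases j <;>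
    simp [Fin.divNat, Fin.modNat, one2, Matrix.one_apply, vecHead, vecTail, Matrix.cons_val_succ,
      my_f2_1, my_f3_1, my_f3_2, my_f4_1, my_f4_2, my_f4_3, my_f5_1, my_f5_2, my_f5_3, my_f5_4, my_f6_1, my_f6_2, my_f6_3, my_f6_4, my_f6_5, my_f7_1, my_f7_2, my_f7_3, my_f7_4, my_f7_5, my_f7_6, my_f8_1, my_f8_2, my_f8_3, my_f8_4, my_f8_5, my_f8_6, my_f8_7,
      my_v8 0, my_v8 1, my_v8 2, my_v8 3, my_v8 4, my_v8 5, my_v8 6, my_v8 7]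

lemma kron_1X (t : ℝ) : kron one2 (Xq t) =
    !![(t:ℂ)⁻¹,0,0,0,0,0,0,0;
       0,0,(t:ℂ),0,0,0,0,0;
       0,(t:ℂ),0,0,0,0,0,0;
       0,0,0,(t:ℂ)⁻¹,0,0,0,0;
       0,0,0,0,(t:ℂ)⁻¹,0,0,0;
       0,0,0,0,0,0,(t:ℂ),0;
       0,0,0,0,0,(t:ℂ),0,0;
       0,0,0,0,0,0,0,(t:ℂ)⁻¹] := by
  rw [Xq_eq]
  show (Matrix.of fun (i j : Fin 8) => _) = _
  ext i j
  fin_cases i <;> fin_cases j <;>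
    simp [Fin.divNat, Fin.modNat, one2, Matrix.one_apply, vecHead, vecTail, Matrix.cons_val_succ,
      my_f2_1, my_f3_1, my_f3_2, my_f4_1, my_f4_2, my_f4_3, my_f5_1, my_f5_2, my_f5_3, my_f5_4, my_f6_1, my_f6_2, my_f6_3, my_f6_4, my_f6_5, my_f7_1, my_f7_2, my_f7_3, my_f7_4, my_f7_5, my_f7_6, my_f8_1, my_f8_2, my_f8_3, my_f8_4, my_f8_5, my_f8_6, my_f8_7,
      my_v8 0, my_v8 1, my_v8 2, my_v8 3, my_v8 4, my_v8 5, my_v8 6, my_v8 7]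

lemma kron_E1 : kron Evec one2 =
    !![0,0; 0,0; 1,0; 0,1; -1,0; 0,-1; 0,0; 0,0] := by
  show (Matrix.of fun (i : Fin 8) (j : Fin 2) => _) = _
  ext i j
  fin_cases i <;> fin_cases j <;>
    simp [Evec, Fin.divNat, Fin.modNat, one2, Matrix.one_apply, vecHead, vecTail, Matrix.cons_val_succ,
      my_f2_1, my_f3_1, my_f3_2, my_f4_1, my_f4_2, my_f4_3, my_f5_1, my_f5_2, my_f5_3, my_f5_4, my_f6_1, my_f6_2, my_f6_3, my_f6_4, my_f6_5, my_f7_1, my_f7_2, my_f7_3, my_f7_4, my_f7_5, my_f7_6, my_f8_1, my_f8_2, my_f8_3, my_f8_4, my_f8_5, my_f8_6, my_f8_7,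
      my_v8 0, my_v8 1, my_v8 2, my_v8 3, my_v8 4, my_v8 5, my_v8 6, my_v8 7,
      my_v2 0, my_v2 1]

lemma kron_1E : kron one2 Evec =
    !![0,0; 1,0; -1,0; 0,0; 0,0; 0,1; 0,-1; 0,0] := by
  show (Matrix.of fun (i : Fin 8) (j : Fin 2) => _) = _
  ext i j
  fin_cases i <;> fin_cases j <;>
    simp [Evec, Fin.divNat, Fin.modNat, one2, Matrix.one_apply, vecHead, vecTail, Matrix.cons_val_succ,
      my_f2_1, my_f3_1, my_f3_2, my_f4_1, my_f4_2, my_f4_3, my_f5_1, my_f5_2, my_f5_3, my_f5_4, my_f6_1, my_f6_2, my_f6_3, my_f6_4, my_f6_5, my_f7_1, my_f7_2, my_f7_3, my_f7_4, my_f7_5, my_f7_6, my_f8_1, my_f8_2, my_f8_3, my_f8_4, my_f8_5, my_f8_6, my_f8_7,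
      my_v8 0, my_v8 1, my_v8 2, my_v8 3, my_v8 4, my_v8 5, my_v8 6, my_v8 7,
      my_v2 0, my_v2 1]

lemma kron_1Ep : kron one2 Evec' =
    (!![0,-1,1,0,0,0,0,0; 0,0,0,0,0,-1,1,0] : Matrix (Fin 2) (Fin 8) ℂ) := by
  show (Matrix.of fun (i : Fin 2) (j : Fin 8) => _) = _
  ext i j
  fin_cases i <;> fin_cases j <;>
    simp [Evec', Fin.divNat, Fin.modNat, one2, Matrix.one_apply, vecHead, vecTail, Matrix.cons_val_succ,
      my_f2_1, my_f3_1, my_f3_2, my_f4_1, my_f4_2, my_f4_3, my_f5_1, my_f5_2, my_f5_3, my_f5_4, my_f6_1, my_f6_2, my_f6_3, my_f6_4, my_f6_5, my_f7_1, my_f7_2, my_f7_3, my_f7_4, my_f7_5, my_f7_6, my_f8_1, my_f8_2, my_f8_3, my_f8_4, my_f8_5, my_f8_6, my_f8_7,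
      my_v8 0, my_v8 1, my_v8 2, my_v8 3, my_v8 4, my_v8 5, my_v8 6, my_v8 7,
      my_v2 0, my_v2 1]

lemma kron_Ep1 : kron Evec' one2 =
    (!![0,0,-1,0,1,0,0,0; 0,0,0,-1,0,1,0,0] : Matrix (Fin 2) (Fin 8) ℂ) := by
  show (Matrix.of fun (i : Fin 2) (j : Fin 8) => _) = _
  ext i j
  fin_cases i <;> fin_cases j <;>
    simp [Evec', Fin.divNat, Fin.modNat, one2, Matrix.one_apply, vecHead, vecTail, Matrix.cons_val_succ,
      my_f2_1, my_f3_1, my_f3_2, my_f4_1, my_f4_2, my_f4_3, my_f5_1, my_f5_2, my_f5_3, my_f5_4, my_f6_1, my_f6_2, my_f6_3, my_f6_4, my_f6_5, my_f7_1, my_f7_2, my_f7_3, my_f7_4, my_f7_5, my_f7_6, my_f8_1, my_f8_2, my_f8_3, my_f8_4, my_f8_5, my_f8_6, my_f8_7,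
      my_v8 0, my_v8 1, my_v8 2, my_v8 3, my_v8 4, my_v8 5, my_v8 6, my_v8 7,
      my_v2 0, my_v2 1]

set_option maxHeartbeats 2000000 in
lemma big_prod (t : ℝ) (ht : (t : ℂ) ≠ 0) :
    (!![(t:ℂ)⁻¹,0,0,0,0,0,0,0;
       0,(t:ℂ)⁻¹,0,0,0,0,0,0;
       0,0,0,0,(t:ℂ),0,0,0;
       0,0,0,0,0,(t:ℂ),0,0;
       0,0,(t:ℂ),0,0,0,0,0;
       0,0,0,(t:ℂ),0,0,0,0;
       0,0,0,0,0,0,(t:ℂ)⁻¹,0;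
       0,0,0,0,0,0,0,(t:ℂ)⁻¹] : Matrix (Fin 8) (Fin 8) ℂ) *
    !![(t:ℂ)⁻¹,0,0,0,0,0,0,0;
       0,0,(t:ℂ),0,0,0,0,0;
       0,(t:ℂ),0,0,0,0,0,0;
       0,0,0,(t:ℂ)⁻¹,0,0,0,0;
       0,0,0,0,(t:ℂ)⁻¹,0,0,0;
       0,0,0,0,0,0,(t:ℂ),0;
       0,0,0,0,0,(t:ℂ),0,0;
       0,0,0,0,0,0,0,(t:ℂ)⁻¹] =
    !![(t:ℂ)⁻¹*(t:ℂ)⁻¹,0,0,0,0,0,0,0;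
       0,0,1,0,0,0,0,0;
       0,0,0,0,1,0,0,0;
       0,0,0,0,0,0,(t:ℂ)*(t:ℂ),0;
       0,(t:ℂ)*(t:ℂ),0,0,0,0,0,0;
       0,0,0,1,0,0,0,0;
       0,0,0,0,0,1,0,0;
       0,0,0,0,0,0,0,(t:ℂ)⁻¹*(t:ℂ)⁻¹] := by
  ext i j
  fin_cases i <;> fin_cases j <;>
    simp [Matrix.mul_apply, Fin.sum_univ_succ, vecHead, vecTail, Matrix.cons_val_succ,
      my_f2_1, my_f3_1, my_f3_2, my_f4_1, my_f4_2, my_f4_3, my_f5_1, my_f5_2, my_f5_3, my_f5_4, my_f6_1, my_f6_2, my_f6_3, my_f6_4, my_f6_5, my_f7_1, my_f7_2, my_f7_3, my_f7_4, my_f7_5, my_f7_6, my_f8_1, my_f8_2, my_f8_3, my_f8_4, my_f8_5, my_f8_6, my_f8_7] <;>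
    field_simp

set_option maxHeartbeats 2000000 in
/-- For `0 < t ≤ 1` and `X = τ·diag(t⁻¹,t,t,t⁻¹)`:
(i) `(X⊗1)(1⊗X)(E⊗1) = 1⊗E`; (ii) `(1⊗E')(X⊗1)(1⊗X) = E'⊗1`; (iii) `τ·conj(X)·τ = X`. -/
theorem Xq_relations (t : ℝ) (ht0 : 0 < t) (ht1 : t ≤ 1) :
    (kron (Xq t) one2 * kron one2 (Xq t) * kron Evec one2 = kron one2 Evec) ∧
    (kron one2 Evec' * kron (Xq t) one2 * kron one2 (Xq t) = kron Evec' one2) ∧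
    (tau4 * (Xq t).map (starRingEnd ℂ) * tau4 = Xq t) := by
  have ht : (t : ℂ) ≠ 0 := by
    exact_mod_cast (Complex.ofReal_ne_zero).2 ht0.ne'
  refine ⟨?_, ?_, ?_⟩
  · rw [kron_X1, kron_1X, kron_E1, kron_1E, big_prod t ht]
    ext i j
    fin_cases i <;> fin_cases j <;>
      simp [Matrix.mul_apply, Fin.sum_univ_succ, vecHead, vecTail, Matrix.cons_val_succ,
      my_f2_1, my_f3_1, my_f3_2, my_f4_1, my_f4_2, my_f4_3, my_f5_1, my_f5_2, my_f5_3, my_f5_4, my_f6_1, my_f6_2, my_f6_3, my_f6_4, my_f6_5, my_f7_1, my_f7_2, my_f7_3, my_f7_4, my_f7_5, my_f7_6, my_f8_1, my_f8_2, my_f8_3, my_f8_4, my_f8_5, my_f8_6, my_f8_7]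
  · rw [kron_X1, kron_1X, kron_1Ep, kron_Ep1, Matrix.mul_assoc, big_prod t ht]
    ext i j
    fin_cases i <;> fin_cases j <;>
      simp [Matrix.mul_apply, Fin.sum_univ_succ, vecHead, vecTail, Matrix.cons_val_succ,
      my_f2_1, my_f3_1, my_f3_2, my_f4_1, my_f4_2, my_f4_3, my_f5_1, my_f5_2, my_f5_3, my_f5_4, my_f6_1, my_f6_2, my_f6_3, my_f6_4, my_f6_5, my_f7_1, my_f7_2, my_f7_3, my_f7_4, my_f7_5, my_f7_6, my_f8_1, my_f8_2, my_f8_3, my_f8_4, my_f8_5, my_f8_6, my_f8_7]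
  · rw [Xq_eq]
    have hmap : (!![(t:ℂ)⁻¹,0,0,0; 0,0,(t:ℂ),0; 0,(t:ℂ),0,0; 0,0,0,(t:ℂ)⁻¹]).map
        (starRingEnd ℂ) = !![(t:ℂ)⁻¹,0,0,0; 0,0,(t:ℂ),0; 0,(t:ℂ),0,0; 0,0,0,(t:ℂ)⁻¹] := by
      ext i j
      fin_cases i <;> fin_cases j <;>
        simp [Matrix.map_apply, Complex.conj_ofReal, map_inv₀, vecHead, vecTail]
    rw [hmap]
    ext i j
    fin_cases i <;> fin_cases j <;>
      simp [tau4, Matrix.mul_apply, Fin.sum_univ_succ, vecHead, vecTail]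
end
end

section
/- Let E ∈ ℂ⁴ be a column vector and E' a row vector of length 4 satisfying (E' ⊗ 1₂)(1₂ ⊗ E) = 1₂ and (1₂ ⊗ E')(E ⊗ 1₂) = 1₂, let X be an invertible 4×4 complex matrix satisfying (X ⊗ 1₂)(1₂ ⊗ X)(E ⊗ 1₂) = 1₂ ⊗ E, and suppose τ·conj(X)·τ = β⁻¹X for some nonzero β ∈ ℂ (conj denotes entrywise complex conjugation). Set Ẽ = τ·conj(E) (a column vector) and Ẽ' = conj(E')·τ (a row vector). Then: (i) β⁻²(1₂ ⊗ X)(X ⊗ 1₂)(1₂ ⊗ Ẽ) = Ẽ ⊗ 1₂; (ii) β²(X⁻¹ ⊗ 1₂)(1₂ ⊗ X⁻¹)(Ẽ ⊗ 1₂) = 1₂ ⊗ Ẽ; (iii) β⁻²(Ẽ' ⊗ 1₂)(1₂ ⊗ X)(X ⊗ 1₂) = 1₂ ⊗ Ẽ'; and (iv) β²(1₂ ⊗ Ẽ')(X⁻¹ ⊗ 1₂)(1₂ ⊗ X⁻¹) = Ẽ' ⊗ 1₂. -/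
open Matrix Complex

noncomputable section

/-- `Ẽ = τ·conj(E)`. -/
def Etilde (E : Matrix (Fin 4) (Fin 1) ℂ) : Matrix (Fin 4) (Fin 1) ℂ :=
  tau4 * E.map (starRingEnd ℂ)

/-- `Ẽ' = conj(E')·τ`. -/
def Etilde' (E' : Matrix (Fin 1) (Fin 4) ℂ) : Matrix (Fin 1) (Fin 4) ℂ :=
  E'.map (starRingEnd ℂ) * tau4


/-!
Write `Y`, `F`, `F'` for the entrywise conjugates of `X`, `E`, `E'`, and let `R` be the
permutation of `ℂ² ⊗ ℂ² ⊗ ℂ²` reversing the three tensor factors. Then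
`R (A ⊗ 1) R = 1 ⊗ τAτ`, `R (1 ⊗ A) R = τAτ ⊗ 1` and `R (v ⊗ 1) = 1 ⊗ τv`, while
`τYτ = β⁻¹X` means `X = β τYτ`. Conjugating by `R` therefore turns (i) into the complex conjugate of
`(X ⊗ 1)(1 ⊗ X)(E ⊗ 1) = 1 ⊗ E`, and (iii) into the complex conjugate of the rotated relation
`(1 ⊗ E')(X ⊗ 1)(1 ⊗ X) = E' ⊗ 1`; (ii) and (iv) follow from (i) and (iii) by moving the
invertible factors to the other side.

The rotated relation comes from bending legs with the snake relation. Reshape `E`, `E'` into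
2 × 2 matrices `N`, `M`, so that the snake relation reads `M N = 1`. Slice `X` into 2 × 2
matrices `S` by fixing its first output and second input leg, and `X⁻¹` into `T` by fixing the
other two. Then `(X ⊗ 1)(1 ⊗ X)(E ⊗ 1) = 1 ⊗ E`, written as `(1 ⊗ X)(E ⊗ 1) = (X⁻¹ ⊗ 1)(1 ⊗ E)`, says
`N S = T N` slice by slice, and the rotated relation, written as
`(1 ⊗ E')(X ⊗ 1) = (E' ⊗ 1)(1 ⊗ X⁻¹)`, says `S M = M T`.
-/

open scoped Kronecker

theorem kron_eq_submatrix_kronecker {m n p q : ℕ} (A : Matrix (Fin m) (Fin n) ℂ)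
    (B : Matrix (Fin p) (Fin q) ℂ) :
    kron A B = (A ⊗ₖ B).submatrix finProdFinEquiv.symm finProdFinEquiv.symm :=
  rfl

theorem kron_mul {m n p q r s : ℕ} (A : Matrix (Fin m) (Fin n) ℂ) (B : Matrix (Fin q) (Fin r) ℂ)
    (C : Matrix (Fin n) (Fin p) ℂ) (D : Matrix (Fin r) (Fin s) ℂ) :
    kron A B * kron C D = kron (A * C) (B * D) := by
  simp only [kron_eq_submatrix_kronecker, submatrix_mul_equiv, mul_kronecker_mul]

theorem kron_one_one {m p : ℕ} :
    kron (1 : Matrix (Fin m) (Fin m) ℂ) (1 : Matrix (Fin p) (Fin p) ℂ) = 1 := by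
  rw [kron_eq_submatrix_kronecker, one_kronecker_one, submatrix_one_equiv]

theorem kron_smul_left {m n p q : ℕ} (c : ℂ) (A : Matrix (Fin m) (Fin n) ℂ)
    (B : Matrix (Fin p) (Fin q) ℂ) : kron (c • A) B = c • kron A B := by
  rw [kron_eq_submatrix_kronecker, smul_kronecker]
  rfl

theorem kron_smul_right {m n p q : ℕ} (c : ℂ) (A : Matrix (Fin m) (Fin n) ℂ)
    (B : Matrix (Fin p) (Fin q) ℂ) : kron A (c • B) = c • kron A B := by
  rw [kron_eq_submatrix_kronecker, kronecker_smul]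
  rfl

theorem kron_map_star {m n p q : ℕ} (A : Matrix (Fin m) (Fin n) ℂ)
    (B : Matrix (Fin p) (Fin q) ℂ) :
    (kron A B).map (starRingEnd ℂ) = kron (A.map (starRingEnd ℂ)) (B.map (starRingEnd ℂ)) := by
  ext i j
  simp [kron]

theorem one2_map_star : one2.map (starRingEnd ℂ) = one2 :=
  Matrix.map_one _ (map_zero _) (map_one _)

theorem kron_mul_kron_one2_of_mul_eq_one {n : ℕ} {A B : Matrix (Fin n) (Fin n) ℂ}
    (h : A * B = 1) : kron A one2 * kron B one2 = 1 := by
  rw [kron_mul, h, one2, one_mul, kron_one_one]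

theorem one2_kron_mul_kron_of_mul_eq_one {n : ℕ} {A B : Matrix (Fin n) (Fin n) ℂ}
    (h : A * B = 1) : kron one2 A * kron one2 B = 1 := by
  rw [kron_mul, h, one2, one_mul, kron_one_one]

def flip4 : Equiv.Perm (Fin 4) :=
  (finProdFinEquiv (m := 2) (n := 2)).symm.trans ((Equiv.prodComm _ _).trans finProdFinEquiv)

@[simp]
theorem flip4_apply (a b : Fin 2) : flip4 (finProdFinEquiv (a, b)) = finProdFinEquiv (b, a) := by
  simp [flip4]

theorem tau4_eq_toMatrix : tau4 = flip4.toPEquiv.toMatrix := by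
  rw [show flip4 = Equiv.swap 1 2 by decide]
  ext i j
  fin_cases i <;> fin_cases j <;> simp [tau4, PEquiv.toMatrix_apply, Equiv.swap_apply_def]

theorem tau4_mul {k : Type*} (M : Matrix (Fin 4) k ℂ) : tau4 * M = M.submatrix flip4 id := by
  rw [tau4_eq_toMatrix, PEquiv.toMatrix_toPEquiv_mul]

theorem mul_tau4 {k : Type*} (M : Matrix k (Fin 4) ℂ) : M * tau4 = M.submatrix id flip4 := by
  rw [tau4_eq_toMatrix, PEquiv.mul_toMatrix_toPEquiv]
  rfl

theorem tau4_mul_mul_tau4 (A : Matrix (Fin 4) (Fin 4) ℂ) :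
    tau4 * A * tau4 = A.submatrix flip4 flip4 := by
  rw [tau4_mul, mul_tau4, submatrix_submatrix]
  rfl

def idx8 : Fin 2 × Fin 2 × Fin 2 ≃ Fin 8 :=
  (Equiv.prodCongr (Equiv.refl _) finProdFinEquiv).trans finProdFinEquiv

def rev8 : Equiv.Perm (Fin 8) :=
  idx8.symm.trans <| Equiv.trans
    ⟨fun x => (x.2.2, x.2.1, x.1), fun x => (x.2.2, x.2.1, x.1), fun _ => rfl, fun _ => rfl⟩ idx8

@[simp]
theorem rev8_idx8 (a b c : Fin 2) : rev8 (idx8 (a, b, c)) = idx8 (c, b, a) := by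
  simp [rev8]

theorem sum_fin8_eq_sum_idx8 (f : Fin 8 → ℂ) :
    ∑ j, f j = ∑ a : Fin 2, ∑ b : Fin 2, ∑ c : Fin 2, f (idx8 (a, b, c)) := by
  rw [← idx8.sum_comp]
  simp only [Fintype.sum_prod_type]

section IndexArithmetic

variable (a b c : Fin 2)

@[simp]
theorem idx8_divNat_left : @Fin.divNat 2 4 (idx8 (a, b, c)) = a := by
  revert a b c; decide

@[simp]
theorem idx8_modNat_left : @Fin.modNat 2 4 (idx8 (a, b, c)) = finProdFinEquiv (b, c) := by
  revert a b c; decide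

@[simp]
theorem idx8_divNat_right : @Fin.divNat 4 2 (idx8 (a, b, c)) = finProdFinEquiv (a, b) := by
  revert a b c; decide

@[simp]
theorem idx8_modNat_right : @Fin.modNat 4 2 (idx8 (a, b, c)) = c := by
  revert a b c; decide

@[simp]
theorem divNat_one_two : @Fin.divNat 1 2 a = 0 := Subsingleton.elim _ _

@[simp]
theorem modNat_one_two : @Fin.modNat 1 2 a = a := by
  revert a; decide

@[simp]
theorem divNat_two_one : @Fin.divNat 2 1 a = a := by
  revert a; decide

@[simp]
theorem modNat_two_one : @Fin.modNat 2 1 a = 0 := Subsingleton.elim _ _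

end IndexArithmetic

/- In this section `Nat.reduceMul` has to be kept out of `simp`: rewriting `Fin (2 * 2)` to
`Fin 4` inside `finProdFinEquiv (b, c)` would stop `flip4_apply` from firing. -/
section Reversal

variable (A : Matrix (Fin 4) (Fin 4) ℂ) (v : Matrix (Fin 4) (Fin 1) ℂ)
  (w : Matrix (Fin 1) (Fin 4) ℂ)

theorem kron_one2_submatrix_flip4 :
    kron one2 (A.submatrix flip4 flip4) = (kron A one2).submatrix rev8 rev8 := by
  ext i j
  obtain ⟨⟨a, b, c⟩, rfl⟩ := idx8.surjective i
  obtain ⟨⟨a', b', c'⟩, rfl⟩ := idx8.surjective j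
  simp [kron, mul_comm, -Nat.reduceMul]

theorem kron_submatrix_flip4_one2 :
    kron (A.submatrix flip4 flip4) one2 = (kron one2 A).submatrix rev8 rev8 := by
  ext i j
  obtain ⟨⟨a, b, c⟩, rfl⟩ := idx8.surjective i
  obtain ⟨⟨a', b', c'⟩, rfl⟩ := idx8.surjective j
  simp [kron, mul_comm, -Nat.reduceMul]

theorem kron_one2_col_submatrix_flip4 :
    kron one2 (v.submatrix flip4 id) = (kron v one2).submatrix rev8 id := by
  ext i j
  obtain ⟨⟨a, b, c⟩, rfl⟩ := idx8.surjective i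
  simp [kron, mul_comm, -Nat.reduceMul]

theorem kron_col_submatrix_flip4_one2 :
    kron (v.submatrix flip4 id) one2 = (kron one2 v).submatrix rev8 id := by
  ext i j
  obtain ⟨⟨a, b, c⟩, rfl⟩ := idx8.surjective i
  simp [kron, mul_comm, -Nat.reduceMul]

theorem kron_one2_row_submatrix_flip4 :
    kron one2 (w.submatrix id flip4) = (kron w one2).submatrix id rev8 := by
  ext i j
  obtain ⟨⟨a, b, c⟩, rfl⟩ := idx8.surjective j
  simp [kron, mul_comm, -Nat.reduceMul]

theorem kron_row_submatrix_flip4_one2 :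
    kron (w.submatrix id flip4) one2 = (kron one2 w).submatrix id rev8 := by
  ext i j
  obtain ⟨⟨a, b, c⟩, rfl⟩ := idx8.surjective j
  simp [kron, mul_comm, -Nat.reduceMul]

end Reversal

section FlippedRelations

variable {X Y : Matrix (Fin 4) (Fin 4) ℂ} (c : ℂ) (hXY : X = c • Y.submatrix flip4 flip4)
include hXY

theorem flipped_cup_relation {F : Matrix (Fin 4) (Fin 1) ℂ}
    (h : kron Y one2 * kron one2 Y * kron F one2 = kron one2 F) :
    kron one2 X * kron X one2 * kron one2 (F.submatrix flip4 id)
      = c ^ 2 • kron (F.submatrix flip4 id) one2 := by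
  rw [hXY, kron_smul_right, kron_smul_left, kron_one2_submatrix_flip4, kron_submatrix_flip4_one2,
    kron_one2_col_submatrix_flip4, kron_col_submatrix_flip4_one2]
  simp only [Matrix.smul_mul, Matrix.mul_smul, submatrix_mul_equiv, h, smul_smul, sq]

theorem flipped_cap_relation {F' : Matrix (Fin 1) (Fin 4) ℂ}
    (h : kron one2 F' * kron Y one2 * kron one2 Y = kron F' one2) :
    kron (F'.submatrix id flip4) one2 * kron one2 X * kron X one2
      = c ^ 2 • kron one2 (F'.submatrix id flip4) := by
  rw [hXY, kron_smul_right, kron_smul_left, kron_one2_submatrix_flip4, kron_submatrix_flip4_one2,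
    kron_one2_row_submatrix_flip4, kron_row_submatrix_flip4_one2]
  simp only [Matrix.smul_mul, Matrix.mul_smul, submatrix_mul_equiv, h, smul_smul, sq]

end FlippedRelations

def reshapeCol (v : Matrix (Fin 4) (Fin 1) ℂ) : Matrix (Fin 2) (Fin 2) ℂ :=
  of fun a b => v (finProdFinEquiv (a, b)) 0

def reshapeRow (w : Matrix (Fin 1) (Fin 4) ℂ) : Matrix (Fin 2) (Fin 2) ℂ :=
  of fun a b => w 0 (finProdFinEquiv (a, b))

def sliceOut₁In₂ (X : Matrix (Fin 4) (Fin 4) ℂ) (b k : Fin 2) : Matrix (Fin 2) (Fin 2) ℂ :=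
  of fun b' c => X (finProdFinEquiv (b, c)) (finProdFinEquiv (b', k))

def sliceOut₂In₁ (X : Matrix (Fin 4) (Fin 4) ℂ) (b k : Fin 2) : Matrix (Fin 2) (Fin 2) ℂ :=
  of fun a b' => X (finProdFinEquiv (a, b)) (finProdFinEquiv (k, b'))

def colSlice (P : Matrix (Fin 8) (Fin 2) ℂ) (b k : Fin 2) : Matrix (Fin 2) (Fin 2) ℂ :=
  of fun a c => P (idx8 (a, b, c)) k

def rowSlice (Q : Matrix (Fin 2) (Fin 8) ℂ) (b k : Fin 2) : Matrix (Fin 2) (Fin 2) ℂ :=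
  of fun p r => Q b (idx8 (p, k, r))

theorem rowSlice_injective : Function.Injective rowSlice := by
  intro Q Q' h
  ext b j
  obtain ⟨⟨p, k, r⟩, rfl⟩ := idx8.surjective j
  exact congrFun (congrFun (congrFun (congrFun h b) k) p) r

section Slices

variable (X : Matrix (Fin 4) (Fin 4) ℂ) (v : Matrix (Fin 4) (Fin 1) ℂ)
  (w : Matrix (Fin 1) (Fin 4) ℂ) (b k : Fin 2)

theorem colSlice_kron_one2_mul :
    colSlice (kron one2 X * kron v one2) b k = reshapeCol v * sliceOut₁In₂ X b k := by
  ext a c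
  simp [colSlice, reshapeCol, sliceOut₁In₂, mul_apply, sum_fin8_eq_sum_idx8, kron, one2,
    one_apply, mul_comm]

theorem colSlice_kron_mul_one2 :
    colSlice (kron X one2 * kron one2 v) b k = sliceOut₂In₁ X b k * reshapeCol v := by
  ext a c
  simp [colSlice, reshapeCol, sliceOut₂In₁, mul_apply, sum_fin8_eq_sum_idx8, kron, one2,
    one_apply]

theorem rowSlice_kron_one2_mul :
    rowSlice (kron one2 w * kron X one2) b k = sliceOut₁In₂ X b k * reshapeRow w := by
  ext p r
  simp [rowSlice, reshapeRow, sliceOut₁In₂, mul_apply, sum_fin8_eq_sum_idx8, kron, one2,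
    one_apply, mul_comm]

theorem rowSlice_kron_mul_one2 :
    rowSlice (kron w one2 * kron one2 X) b k = reshapeRow w * sliceOut₂In₁ X b k := by
  ext p r
  simp [rowSlice, reshapeRow, sliceOut₂In₁, mul_apply, sum_fin8_eq_sum_idx8, kron, one2,
    one_apply]

theorem kron_mul_kron_apply_eq_reshape (p q : Fin 2) :
    (kron w one2 * kron one2 v) p q = (reshapeRow w * reshapeCol v) q p := by
  simp [reshapeRow, reshapeCol, mul_apply, sum_fin8_eq_sum_idx8, kron, one2, one_apply]

end Slices

theorem reshapeRow_mul_reshapeCol_eq_one {v : Matrix (Fin 4) (Fin 1) ℂ}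
    {w : Matrix (Fin 1) (Fin 4) ℂ} (h : kron w one2 * kron one2 v = one2) :
    reshapeRow w * reshapeCol v = 1 := by
  ext p q
  rw [← kron_mul_kron_apply_eq_reshape, h, one2, one_apply, one_apply]
  simp only [eq_comm]

theorem SemiconjBy.symm_of_mul_eq_one {M : Type*} [Monoid M] [IsDedekindFiniteMonoid M]
    {m n s t : M} (hmn : m * n = 1) (h : SemiconjBy n s t) : SemiconjBy m t s := by
  have hnm : n * m = 1 := mul_eq_one_comm.mp hmn
  calc m * t = m * t * (n * m) := by rw [hnm, mul_one]
    _ = m * (n * s) * m := by rw [h.eq]; simp only [mul_assoc]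
    _ = s * m := by rw [← mul_assoc, hmn, one_mul]

theorem rotated_cap_relation {E : Matrix (Fin 4) (Fin 1) ℂ} {E' : Matrix (Fin 1) (Fin 4) ℂ}
    {X : Matrix (Fin 4) (Fin 4) ℂ} (hX : IsUnit X) (hsnake : reshapeRow E' * reshapeCol E = 1)
    (hXE : kron X one2 * kron one2 X * kron E one2 = kron one2 E) :
    kron one2 E' * kron X one2 * kron one2 X = kron E' one2 := by
  have hXinv : X⁻¹ * X = 1 := nonsing_inv_mul X ((isUnit_iff_isUnit_det X).mp hX)
  have hcup : kron one2 X * kron E one2 = kron X⁻¹ one2 * kron one2 E := by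
    rw [← hXE, Matrix.mul_assoc, ← Matrix.mul_assoc, ← Matrix.mul_assoc,
      kron_mul_kron_one2_of_mul_eq_one hXinv, Matrix.one_mul]
  have hcap : kron one2 E' * kron X one2 = kron E' one2 * kron one2 X⁻¹ := by
    refine rowSlice_injective (funext₂ fun b k => ?_)
    rw [rowSlice_kron_one2_mul, rowSlice_kron_mul_one2]
    refine (SemiconjBy.symm_of_mul_eq_one hsnake ?_).eq.symm
    rw [SemiconjBy, ← colSlice_kron_one2_mul, ← colSlice_kron_mul_one2, hcup]
  rw [hcap, Matrix.mul_assoc, one2_kron_mul_kron_of_mul_eq_one hXinv, Matrix.mul_one]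

section Inversion

variable {X : Matrix (Fin 4) (Fin 4) ℂ} (hX : IsUnit X) {c : ℂ}
include hX

theorem smul_inv_cup_relation {v w : Matrix (Fin 8) (Fin 2) ℂ}
    (h : kron one2 X * kron X one2 * v = c • w) :
    c • (kron X⁻¹ one2 * kron one2 X⁻¹ * w) = v := by
  have hXinv : X⁻¹ * X = 1 := nonsing_inv_mul X ((isUnit_iff_isUnit_det X).mp hX)
  rw [← Matrix.mul_smul, ← h, Matrix.mul_assoc, ← Matrix.mul_assoc (kron one2 X⁻¹),
    ← Matrix.mul_assoc (kron one2 X⁻¹), one2_kron_mul_kron_of_mul_eq_one hXinv, Matrix.one_mul,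
    ← Matrix.mul_assoc, kron_mul_kron_one2_of_mul_eq_one hXinv, Matrix.one_mul]

theorem smul_inv_cap_relation {v w : Matrix (Fin 2) (Fin 8) ℂ}
    (h : v * kron one2 X * kron X one2 = c • w) :
    c • (w * kron X⁻¹ one2 * kron one2 X⁻¹) = v := by
  have hXinv : X * X⁻¹ = 1 := mul_nonsing_inv X ((isUnit_iff_isUnit_det X).mp hX)
  rw [← Matrix.smul_mul, ← Matrix.smul_mul, ← h, Matrix.mul_assoc (v * _),
    kron_mul_kron_one2_of_mul_eq_one hXinv, Matrix.mul_one, Matrix.mul_assoc,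
    one2_kron_mul_kron_of_mul_eq_one hXinv, Matrix.mul_one]

end Inversion

theorem conjugated_snake_relations_general
    (E : Matrix (Fin 4) (Fin 1) ℂ) (E' : Matrix (Fin 1) (Fin 4) ℂ)
    (X : Matrix (Fin 4) (Fin 4) ℂ) (hX : IsUnit X)
    (β : ℂ) (hβ : β ≠ 0)
    (hsnake1 : kron E' one2 * kron one2 E = one2)
    (hXE : kron X one2 * kron one2 X * kron E one2 = kron one2 E)
    (hXconj : tau4 * X.map (starRingEnd ℂ) * tau4 = β⁻¹ • X) :
    ((β ^ 2)⁻¹ • (kron one2 X * kron X one2 * kron one2 (Etilde E)) = kron (Etilde E) one2) ∧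
    ((β ^ 2) • (kron X⁻¹ one2 * kron one2 X⁻¹ * kron (Etilde E) one2) = kron one2 (Etilde E)) ∧
    ((β ^ 2)⁻¹ • (kron (Etilde' E') one2 * kron one2 X * kron X one2) = kron one2 (Etilde' E')) ∧
    ((β ^ 2) • (kron one2 (Etilde' E') * kron X⁻¹ one2 * kron one2 X⁻¹)
      = kron (Etilde' E') one2) := by
  have hXY : X = β • (X.map (starRingEnd ℂ)).submatrix flip4 flip4 := by
    rw [← tau4_mul_mul_tau4, hXconj, smul_smul, mul_inv_cancel₀ hβ, one_smul]
  have hY : IsUnit (X.map (starRingEnd ℂ)) := hX.map (starRingEnd ℂ).mapMatrix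
  have hYF := congrArg (map · (starRingEnd ℂ)) hXE
  simp only [Matrix.map_mul, kron_map_star, one2_map_star] at hYF
  have hsnake : reshapeRow (E'.map (starRingEnd ℂ)) * reshapeCol (E.map (starRingEnd ℂ)) = 1 := by
    rw [← (starRingEnd ℂ).mapMatrix.map_one, ← reshapeRow_mul_reshapeCol_eq_one hsnake1, map_mul]
    rfl
  have hcup := flipped_cup_relation β hXY hYF
  have hcap := flipped_cap_relation β hXY (rotated_cap_relation hY hsnake hYF)
  have hβ2 : β ^ 2 ≠ 0 := pow_ne_zero 2 hβ
  rw [Etilde, Etilde', tau4_mul, mul_tau4]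
  refine ⟨?_, smul_inv_cup_relation hX hcup, ?_, smul_inv_cap_relation hX hcap⟩
  · rw [hcup, smul_smul, inv_mul_cancel₀ hβ2, one_smul]
  · rw [hcap, smul_smul, inv_mul_cancel₀ hβ2, one_smul]

/-- If `E`, `E'` satisfy the snake relations, `X` is invertible with
`(X⊗1)(1⊗X)(E⊗1) = 1⊗E` and `τ·conj(X)·τ = β⁻¹X`, then with `Ẽ = τ·conj(E)` and
`Ẽ' = conj(E')·τ`:
(i) `β⁻²(1⊗X)(X⊗1)(1⊗Ẽ) = Ẽ⊗1`; (ii) `β²(X⁻¹⊗1)(1⊗X⁻¹)(Ẽ⊗1) = 1⊗Ẽ`;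
(iii) `β⁻²(Ẽ'⊗1)(1⊗X)(X⊗1) = 1⊗Ẽ'`; (iv) `β²(1⊗Ẽ')(X⁻¹⊗1)(1⊗X⁻¹) = Ẽ'⊗1`. -/
theorem conjugated_snake_relations
    (E : Matrix (Fin 4) (Fin 1) ℂ) (E' : Matrix (Fin 1) (Fin 4) ℂ)
    (X : Matrix (Fin 4) (Fin 4) ℂ) (hX : IsUnit X)
    (β : ℂ) (hβ : β ≠ 0)
    (hsnake1 : kron E' one2 * kron one2 E = one2)
    (hsnake2 : kron one2 E' * kron E one2 = one2)
    (hXE : kron X one2 * kron one2 X * kron E one2 = kron one2 E)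
    (hXconj : tau4 * X.map (starRingEnd ℂ) * tau4 = β⁻¹ • X) :
    ((β ^ 2)⁻¹ • (kron one2 X * kron X one2 * kron one2 (Etilde E)) = kron (Etilde E) one2) ∧
    ((β ^ 2) • (kron X⁻¹ one2 * kron one2 X⁻¹ * kron (Etilde E) one2) = kron one2 (Etilde E)) ∧
    ((β ^ 2)⁻¹ • (kron (Etilde' E') one2 * kron one2 X * kron X one2) = kron one2 (Etilde' E')) ∧
    ((β ^ 2) • (kron one2 (Etilde' E') * kron X⁻¹ one2 * kron one2 X⁻¹)
      = kron (Etilde' E') one2) :=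
  conjugated_snake_relations_general E E' X hX β hβ hsnake1 hXE hXconj
end
end

section
/- For all y,z ∈ ℂ, the 25×25 matrix W = y·τ₅ + z·m_P satisfies the braid equation (W ⊗ 1₅)(1₅ ⊗ W)(W ⊗ 1₅) = (1₅ ⊗ W)(W ⊗ 1₅)(1₅ ⊗ W) as 125×125 matrices; moreover W is invertible if and only if y ≠ 0. -/
open Matrix Complex

noncomputable section

/-- The flip matrix τ₅ on ℂ⁵⊗ℂ⁵ ≅ ℂ²⁵ determined by τ₅(u⊗v) = v⊗u. -/
def tau5 : Matrix (Fin (5 * 5)) (Fin (5 * 5)) ℂ :=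
  Matrix.of fun i j => if i.divNat = j.modNat ∧ i.modNat = j.divNat then 1 else 0

/-- The Minkowski metric η padded to a 5×5 matrix (zeros in the last row and column). -/
def eta5 : Matrix (Fin 5) (Fin 5) ℂ :=
  Matrix.of fun i j =>
    if i = j then (if i = (4 : Fin 5) then 0 else if i = 0 then 1 else -1) else 0

/-- The vector `m̂ = Σ_{i,j=1}^{4} η_{ij} e_i ⊗ e_j ∈ ℂ⁵⊗ℂ⁵`. -/
def mhat : Fin (5 * 5) → ℂ := fun p => eta5 p.divNat p.modNat

/-- The rank-one matrix `m_P = m̂·(e₅⊗e₅)ᵀ`. -/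
def mP : Matrix (Fin (5 * 5)) (Fin (5 * 5)) ℂ :=
  Matrix.of fun p q =>
    mhat p * (if q.divNat = (4 : Fin 5) ∧ q.modNat = (4 : Fin 5) then 1 else 0)

/-- 5×5 identity matrix. -/
def one5 : Matrix (Fin 5) (Fin 5) ℂ := 1

namespace BraidAux

open Kronecker

abbrev F5 := Fin 5
abbrev T3 := (F5 × F5) × F5

def tp : Matrix (F5 × F5) (F5 × F5) ℂ :=
  Matrix.of fun p q => if p.1 = q.2 ∧ p.2 = q.1 then 1 else 0
def mp : Matrix (F5 × F5) (F5 × F5) ℂ :=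
  Matrix.of fun p q => eta5 p.1 p.2 * (if q.1 = (4:F5) ∧ q.2 = (4:F5) then 1 else 0)

-- eta facts
lemma eta_symm (a b : F5) : eta5 a b = eta5 b a := by
  rcases eq_or_ne a b with h | h
  · subst h; rfl
  · simp [eta5, h, h.symm]
lemma eta_four (b : F5) : eta5 4 b = 0 := by
  rcases eq_or_ne (4:F5) b with h | h <;> simp [eta5, h]
lemma eta_four' (a : F5) : eta5 a 4 = 0 := by rw [eta_symm]; exact eta_four a

-- permutations
def sA : Equiv.Perm T3 := (Equiv.prodComm F5 F5).prodCongr (Equiv.refl F5)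
def sC : Equiv.Perm T3 :=
  ⟨fun x => ((x.1.1, x.2), x.1.2), fun x => ((x.1.1, x.2), x.1.2), fun x => rfl, fun x => rfl⟩

lemma sA_apply (a b c : F5) : sA ((a,b),c) = ((b,a),c) := rfl
lemma sC_apply (a b c : F5) : sC ((a,b),c) = ((a,c),b) := rfl
lemma sA_symm : sA.symm = sA := rfl
lemma sC_symm : sC.symm = sC := rfl

def A3 : Matrix T3 T3 ℂ := tp ⊗ₖ (1 : Matrix F5 F5 ℂ)
def B3 : Matrix T3 T3 ℂ := mp ⊗ₖ (1 : Matrix F5 F5 ℂ)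
def C3 : Matrix T3 T3 ℂ :=
  (((1 : Matrix F5 F5 ℂ) ⊗ₖ tp)).submatrix (Equiv.prodAssoc F5 F5 F5) (Equiv.prodAssoc F5 F5 F5)
def D3 : Matrix T3 T3 ℂ :=
  (((1 : Matrix F5 F5 ℂ) ⊗ₖ mp)).submatrix (Equiv.prodAssoc F5 F5 F5) (Equiv.prodAssoc F5 F5 F5)

lemma A3_eq : A3 = (sA.toPEquiv.toMatrix : Matrix T3 T3 ℂ) := by
  ext ⟨⟨a,b⟩,c⟩ ⟨⟨d,e⟩,f⟩
  simp [A3, tp, sA, PEquiv.toMatrix_apply, Equiv.toPEquiv_apply, one_apply, Prod.ext_iff,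
    Option.mem_def, kroneckerMap_apply]
  split_ifs <;> simp_all <;> tauto

lemma C3_eq : C3 = (sC.toPEquiv.toMatrix : Matrix T3 T3 ℂ) := by
  ext ⟨⟨a,b⟩,c⟩ ⟨⟨d,e⟩,f⟩
  simp [C3, tp, sC, PEquiv.toMatrix_apply, Equiv.toPEquiv_apply, one_apply, Prod.ext_iff,
    Option.mem_def, kroneckerMap_apply, Equiv.prodAssoc]
  split_ifs <;> simp_all <;> tauto

lemma A3_mul (M : Matrix T3 T3 ℂ) : A3 * M = M.submatrix sA id := by
  rw [A3_eq, PEquiv.toMatrix_toPEquiv_mul]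
lemma mul_A3 (M : Matrix T3 T3 ℂ) : M * A3 = M.submatrix id sA := by
  rw [A3_eq, PEquiv.mul_toMatrix_toPEquiv, sA_symm]
lemma C3_mul (M : Matrix T3 T3 ℂ) : C3 * M = M.submatrix sC id := by
  rw [C3_eq, PEquiv.toMatrix_toPEquiv_mul]
lemma mul_C3 (M : Matrix T3 T3 ℂ) : M * C3 = M.submatrix id sC := by
  rw [C3_eq, PEquiv.mul_toMatrix_toPEquiv, sC_symm]

lemma B3_apply (a b c d e f : F5) :
    B3 ((a,b),c) ((d,e),f) = eta5 a b * ((if d = 4 ∧ e = 4 then 1 else 0) * if c = f then 1 else 0) := by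
  simp [B3, mp, one_apply, kroneckerMap_apply, mul_assoc]
lemma D3_apply (a b c d e f : F5) :
    D3 ((a,b),c) ((d,e),f) = (if a = d then 1 else 0) * (eta5 b c * if e = 4 ∧ f = 4 then 1 else 0) := by
  simp [D3, mp, one_apply, kroneckerMap_apply, Equiv.prodAssoc]

lemma rel1 : A3 * C3 * A3 = C3 * A3 * C3 := by
  rw [A3_mul, mul_A3, C3_mul, mul_C3, submatrix_submatrix, submatrix_submatrix]
  ext ⟨⟨a,b⟩,c⟩ ⟨⟨d,e⟩,f⟩
  simp [C3, A3, tp, one_apply, kroneckerMap_apply, Equiv.prodAssoc, sA, sC, Prod.ext_iff]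
  split_ifs <;> simp_all

lemma rel2 : A3 * C3 * B3 = D3 * A3 * C3 := by
  rw [mul_assoc, C3_mul, A3_mul, mul_A3, mul_C3, submatrix_submatrix, submatrix_submatrix]
  ext ⟨⟨a,b⟩,c⟩ ⟨⟨d,e⟩,f⟩
  simp only [submatrix_apply, Function.comp, id_eq, sA_apply, sC_apply, B3_apply, D3_apply]
  rw [eta_symm]
  split_ifs <;> simp_all <;> ring

lemma rel3 : A3 * D3 * A3 = C3 * B3 * C3 := by
  rw [mul_assoc, mul_assoc, A3_mul, mul_A3, C3_mul, mul_C3, submatrix_submatrix, submatrix_submatrix]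
  ext ⟨⟨a,b⟩,c⟩ ⟨⟨d,e⟩,f⟩
  simp only [submatrix_apply, Function.comp, id_eq, sA_apply, sC_apply, B3_apply, D3_apply]
  split_ifs <;> simp_all <;> ring

lemma rel4 : B3 * C3 * A3 = C3 * A3 * D3 := by
  rw [mul_C3, mul_A3, mul_assoc, A3_mul, C3_mul, submatrix_submatrix, submatrix_submatrix]
  ext ⟨⟨a,b⟩,c⟩ ⟨⟨d,e⟩,f⟩
  simp only [submatrix_apply, Function.comp, id_eq, sA_apply, sC_apply, B3_apply, D3_apply]
  split_ifs <;> simp_all <;> ring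

lemma hBD : B3 * D3 = 0 := by
  ext ⟨⟨a,b⟩,c⟩ ⟨⟨d,e⟩,f⟩
  rw [mul_apply]
  refine Finset.sum_eq_zero fun ⟨⟨p,q⟩,r⟩ _ => ?_
  rw [B3_apply, D3_apply]
  by_cases h : p = 4 ∧ q = 4
  · rw [h.1, h.2]; simp [eta_four]
  · simp [h]

lemma hDB : D3 * B3 = 0 := by
  ext ⟨⟨a,b⟩,c⟩ ⟨⟨d,e⟩,f⟩
  rw [mul_apply]
  refine Finset.sum_eq_zero fun ⟨⟨p,q⟩,r⟩ _ => ?_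
  rw [B3_apply, D3_apply]
  by_cases h : q = 4
  · rw [h]; simp [eta_four']
  · simp [h]

lemma hBCB : B3 * C3 * B3 = 0 := by
  rw [mul_C3]
  ext ⟨⟨a,b⟩,c⟩ ⟨⟨d,e⟩,f⟩
  rw [mul_apply]
  refine Finset.sum_eq_zero fun ⟨⟨p,q⟩,r⟩ _ => ?_
  simp only [submatrix_apply, id_eq, sC_apply]
  rw [B3_apply, B3_apply]
  by_cases h : p = 4
  · rw [h]; simp [eta_four]
  · simp [h]

lemma hDAD : D3 * A3 * D3 = 0 := by
  rw [mul_A3]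
  ext ⟨⟨a,b⟩,c⟩ ⟨⟨d,e⟩,f⟩
  rw [mul_apply]
  refine Finset.sum_eq_zero fun ⟨⟨p,q⟩,r⟩ _ => ?_
  rw [submatrix_apply, sA_apply, D3_apply, D3_apply]
  by_cases h : r = 4
  · rw [h]; simp [eta_four']
  · simp [h]

def sw : Equiv.Perm (F5 × F5) := Equiv.prodComm F5 F5

lemma tp_perm : tp = (sw.toPEquiv.toMatrix : Matrix (F5×F5) (F5×F5) ℂ) := by
  ext ⟨a,b⟩ ⟨c,d⟩
  simp [tp, sw, PEquiv.toMatrix_apply, Equiv.toPEquiv_apply, Option.mem_def, Prod.ext_iff]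
  split_ifs <;> simp_all <;> tauto

lemma tp_tp : tp * tp = 1 := by
  rw [tp_perm, PEquiv.toMatrix_toPEquiv_mul, ← tp_perm]
  ext ⟨a,b⟩ ⟨c,d⟩
  simp [tp, sw, one_apply, Prod.ext_iff]
  split_ifs <;> simp_all <;> tauto

lemma tp_mp : tp * mp = mp := by
  rw [tp_perm, PEquiv.toMatrix_toPEquiv_mul]
  ext ⟨a,b⟩ ⟨c,d⟩
  simp only [submatrix_apply, id_eq, mp, of_apply, sw, Equiv.prodComm_apply, Prod.swap]
  rw [eta_symm]

lemma mp_tp : mp * tp = mp := by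
  rw [tp_perm, PEquiv.mul_toMatrix_toPEquiv]
  ext ⟨a,b⟩ ⟨c,d⟩
  simp only [submatrix_apply, id_eq, mp, of_apply]
  have : (sw.symm (c,d)) = (d,c) := rfl
  rw [this]
  exact congrArg _ (if_congr and_comm rfl rfl)

lemma mp_mp : mp * mp = 0 := by
  ext ⟨a,b⟩ ⟨c,d⟩
  rw [mul_apply]
  refine Finset.sum_eq_zero fun ⟨p,q⟩ _ => ?_
  simp only [mp, of_apply]
  by_cases h : p = 4
  · rw [h]; simp [eta_four]
  · simp [h]

lemma hADB : A3 * D3 * B3 = 0 := by rw [mul_assoc, hDB, mul_zero]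
lemma hBDA : B3 * D3 * A3 = 0 := by rw [hBD, zero_mul]
lemma hBDB : B3 * D3 * B3 = 0 := by rw [hBD, zero_mul]
lemma hCBD : C3 * B3 * D3 = 0 := by rw [mul_assoc, hBD, mul_zero]
lemma hDBC : D3 * B3 * C3 = 0 := by rw [hDB, zero_mul]
lemma hDBD : D3 * B3 * D3 = 0 := by rw [hDB, zero_mul]

lemma braid3 (y z : ℂ) :
    (y • A3 + z • B3) * (y • C3 + z • D3) * (y • A3 + z • B3)
      = (y • C3 + z • D3) * (y • A3 + z • B3) * (y • C3 + z • D3) := by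
  simp only [add_mul, mul_add, smul_mul_assoc, mul_smul_comm, smul_smul, smul_add]
  rw [rel1, rel2, rel3, rel4, hADB, hBCB, hBDA, hBDB, hCBD, hDAD, hDBC, hDBD]
  module

lemma unit_iff (y z : ℂ) : IsUnit (y • tp + z • mp) ↔ y ≠ 0 := by
  constructor
  · intro h hy0
    subst hy0
    rw [zero_smul, zero_add] at h
    have hsq : (z • mp) * (z • mp) = 0 := by
      rw [smul_mul_assoc, mul_smul_comm, mp_mp, smul_zero, smul_zero]
    obtain ⟨u, hu⟩ := h
    have h1 : (z • mp) * (↑u⁻¹ : Matrix (F5×F5) (F5×F5) ℂ) = 1 := by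
      rw [← hu]; exact u.mul_inv
    have h0 : z • mp = 0 := by
      calc z • mp = (z • mp) * ((z • mp) * (↑u⁻¹ : Matrix (F5×F5) (F5×F5) ℂ)) := by
            rw [h1, mul_one]
        _ = ((z • mp) * (z • mp)) * (↑u⁻¹ : Matrix (F5×F5) (F5×F5) ℂ) := by rw [mul_assoc]
        _ = 0 := by rw [hsq, zero_mul]
    rw [h0] at h1
    rw [zero_mul] at h1
    exact one_ne_zero h1.symm
  · intro hy
    have h1 : (y • tp + z • mp) * (y⁻¹ • tp + (-(z/(y*y))) • mp) = 1 := by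
      simp only [add_mul, mul_add, smul_mul_assoc, mul_smul_comm, smul_smul, smul_add]
      rw [tp_tp, tp_mp, mp_tp, mp_mp]
      match_scalars <;> field_simp <;> ring
    have h2 : (y⁻¹ • tp + (-(z/(y*y))) • mp) * (y • tp + z • mp) = 1 := by
      simp only [add_mul, mul_add, smul_mul_assoc, mul_smul_comm, smul_smul, smul_add]
      rw [tp_tp, tp_mp, mp_tp, mp_mp]
      match_scalars <;> field_simp <;> ring
    exact ⟨⟨_, _, h1, h2⟩, rfl⟩

def e1 : F5 × F5 ≃ Fin (5*5) := finProdFinEquiv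
def al : T3 ≃ F5 × (F5 × F5) := Equiv.prodAssoc F5 F5 F5
def LL : T3 ≃ Fin (5*5*5) := (Equiv.prodCongr e1 (Equiv.refl F5)).trans finProdFinEquiv
def RR : T3 ≃ Fin (5*(5*5)) := al.trans ((Equiv.prodCongr (Equiv.refl F5) e1).trans finProdFinEquiv)

lemma divNat_fpf {m n : ℕ} (a : Fin m) (b : Fin n) : (finProdFinEquiv (a, b)).divNat = a :=
  congrArg Prod.fst (finProdFinEquiv.symm_apply_apply (a, b))
lemma modNat_fpf {m n : ℕ} (a : Fin m) (b : Fin n) : (finProdFinEquiv (a, b)).modNat = b :=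
  congrArg Prod.snd (finProdFinEquiv.symm_apply_apply (a, b))

lemma fpf_divmod {m n : ℕ} (i : Fin (m*n)) : finProdFinEquiv (i.divNat, i.modNat) = i :=
  finProdFinEquiv.apply_symm_apply i

lemma al_apply (a b c : F5) : al ((a,b),c) = (a,(b,c)) := rfl

lemma tau5_sub : tau5.submatrix e1 e1 = tp := by
  ext ⟨a,b⟩ ⟨c,d⟩
  simp only [tau5, tp, e1, submatrix_apply, of_apply]
  rw [divNat_fpf, modNat_fpf, divNat_fpf, modNat_fpf]

lemma mP_sub : mP.submatrix e1 e1 = mp := by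
  ext ⟨a,b⟩ ⟨c,d⟩
  simp only [mP, mp, mhat, e1, submatrix_apply, of_apply]
  rw [divNat_fpf, modNat_fpf, divNat_fpf, modNat_fpf]

lemma LL_symm_apply (i : Fin (5*5*5)) :
    LL.symm i = ((i.divNat.divNat, i.divNat.modNat), i.modNat) := rfl
lemma RR_symm_apply (i : Fin (5*(5*5))) :
    RR.symm i = ((i.divNat, i.modNat.divNat), i.modNat.modNat) := rfl

lemma kron_left (M : Matrix (Fin (5*5)) (Fin (5*5)) ℂ) :
    kron M one5
      = ((M.submatrix e1 e1) ⊗ₖ (1 : Matrix F5 F5 ℂ)).submatrix LL.symm LL.symm := by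
  ext i j
  simp only [kron, submatrix_apply, of_apply, kroneckerMap_apply, LL_symm_apply, e1, one5]
  rw [fpf_divmod, fpf_divmod]

lemma kron_right (M : Matrix (Fin (5*5)) (Fin (5*5)) ℂ) :
    kron one5 M
      = (((1 : Matrix F5 F5 ℂ) ⊗ₖ (M.submatrix e1 e1)).submatrix al al).submatrix
          RR.symm RR.symm := by
  ext i j
  simp only [kron, submatrix_apply, of_apply, kroneckerMap_apply, RR_symm_apply, e1, one5,
    al_apply]
  rw [fpf_divmod, fpf_divmod]
lemma LL_eq_RR : LL = RR := by
  apply Equiv.ext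
  rintro ⟨⟨a,b⟩,c⟩
  apply Fin.ext
  show (finProdFinEquiv (e1 (a,b), c) : ℕ) = (finProdFinEquiv ((a : F5), e1 (b,c)) : ℕ)
  simp [finProdFinEquiv, e1]
  ring

end BraidAux

open BraidAux Kronecker

set_option maxHeartbeats 1000000 in
/-- For all `y, z ∈ ℂ`, `W = y·τ₅ + z·m_P` satisfies the braid equation
`(W⊗1₅)(1₅⊗W)(W⊗1₅) = (1₅⊗W)(W⊗1₅)(1₅⊗W)`, and `W` is invertible iff `y ≠ 0`. -/
theorem braid_solutions (y z : ℂ) :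
    (kron (y • tau5 + z • mP) one5 * kron one5 (y • tau5 + z • mP) *
        kron (y • tau5 + z • mP) one5
      = kron one5 (y • tau5 + z • mP) * kron (y • tau5 + z • mP) one5 *
        kron one5 (y • tau5 + z • mP)) ∧
    (IsUnit (y • tau5 + z • mP) ↔ y ≠ 0) := by
  have hsub : (y • tau5 + z • mP).submatrix e1 e1 = y • tp + z • mp := by
    have : (y • tau5 + z • mP).submatrix e1 e1
        = y • tau5.submatrix e1 e1 + z • mP.submatrix e1 e1 := rfl
    rw [this, tau5_sub, mP_sub]
  have hX : kron (y • tau5 + z • mP) one5 = (y • A3 + z • B3).submatrix LL.symm LL.symm := by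
    rw [kron_left, hsub]
    congr 1
    rw [add_kronecker, smul_kronecker, smul_kronecker]
    rfl
  have hY : kron one5 (y • tau5 + z • mP) = (y • C3 + z • D3).submatrix LL.symm LL.symm := by
    rw [kron_right, hsub, ← LL_eq_RR]
    congr 1
    rw [kronecker_add, kronecker_smul, kronecker_smul, submatrix_add, submatrix_smul,
      submatrix_smul]
    rfl
  constructor
  · rw [hX, hY, submatrix_mul_equiv, submatrix_mul_equiv, submatrix_mul_equiv,
      submatrix_mul_equiv]
    exact congrArg (fun M => M.submatrix (⇑LL.symm) (⇑LL.symm)) (braid3 y z)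
  · have hW : y • tau5 + z • mP = (reindexAlgEquiv ℂ ℂ e1) (y • tp + z • mp) := by
      rw [reindexAlgEquiv_apply, reindex_apply, ← hsub, submatrix_submatrix,
        Equiv.self_comp_symm, submatrix_id_id]
    rw [hW]
    rw [← unit_iff y z]
    constructor
    · intro h
      have := h.map (reindexAlgEquiv ℂ ℂ e1).symm
      simpa using this
    · intro h
      exact h.map (reindexAlgEquiv ℂ ℂ e1)
end
end

section
/- Let q ∈ {1,-1} and let R'' be the 16×16 matrix acting on ℂ⁴⊗ℂ⁴ by R''(e_{(α,β)} ⊗ e_{(γ,δ)}) = q^{α+β+γ+δ} e_{(γ,δ)} ⊗ e_{(α,β)} for α,β,γ,δ ∈ {1,2}. Then for every n ≥ 1 there exists a unique group homomorphism ρ_n from the symmetric group S_n to GL((ℂ⁴)^{⊗n}) sending the adjacent transposition (k,k+1) to 1^{⊗(k-1)} ⊗ R'' ⊗ 1^{⊗(n-k-1)} (1 the identity on ℂ⁴), and the operator S = (1/n!) Σ_{π ∈ S_n} ρ_n(π) is an idempotent whose trace (equivalently, whose rank) equals (n+1)(n+2)(n+3)/6, the number of monomials of degree n in 4 commuting variables.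 -/
open Matrix Complex

noncomputable section

/-- The weight `α + β` of a basis index of ℂ⁴, where the basis is indexed by pairs
`(α,β) ∈ {1,2}²` in the order (1,1),(1,2),(2,1),(2,2): index `k` corresponds to
`(α,β) = (k/2 + 1, k%2 + 1)`. -/
def wt (k : Fin 4) : ℕ := (k : ℕ) / 2 + 1 + ((k : ℕ) % 2 + 1)

/-- The operator `1^{⊗(k)} ⊗ R'' ⊗ 1^{⊗(n-k-2)}` on `(ℂ⁴)^{⊗n}`, where
`R''(e_{(α,β)} ⊗ e_{(γ,δ)}) = q^{α+β+γ+δ} e_{(γ,δ)} ⊗ e_{(α,β)}` acts on the tensor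
factors `k` and `k+1` (0-indexed). The tensor power `(ℂ⁴)^{⊗n}` is realized with basis
indexed by functions `Fin n → Fin 4`. -/
def siteOp (q : ℂ) (n k : ℕ) (hk : k + 1 < n) :
    Matrix (Fin n → Fin 4) (Fin n → Fin 4) ℂ :=
  Matrix.of fun r c =>
    if (∀ j : Fin n, (j : ℕ) ≠ k → (j : ℕ) ≠ k + 1 → r j = c j)
        ∧ r ⟨k, Nat.lt_of_succ_lt hk⟩ = c ⟨k + 1, hk⟩
        ∧ r ⟨k + 1, hk⟩ = c ⟨k, Nat.lt_of_succ_lt hk⟩ then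
      q ^ (wt (c ⟨k, Nat.lt_of_succ_lt hk⟩) + wt (c ⟨k + 1, hk⟩))
    else 0

namespace SymAux

variable {q : ℂ} {n : ℕ}

lemma qpow_parity (hq2 : q ^ 2 = 1) (a b : ℕ) (h : a % 2 = b % 2) : q ^ a = q ^ b := by
  have key : ∀ m : ℕ, q ^ m = q ^ (m % 2) := by
    intro m
    conv_lhs => rw [← Nat.div_add_mod m 2]
    rw [pow_add, pow_mul, hq2, one_pow, one_mul]
  rw [key a, key b, h]

def dvec (q : ℂ) {n : ℕ} (c : Fin n → Fin 4) : ℂ := ∏ i, q ^ (wt (c i) * (i : ℕ))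

def Pmat (n : ℕ) (σ : Equiv.Perm (Fin n)) : Matrix (Fin n → Fin 4) (Fin n → Fin 4) ℂ :=
  Matrix.of fun r c => if c = r ∘ σ then 1 else 0

def Mmat (q : ℂ) (n : ℕ) (σ : Equiv.Perm (Fin n)) : Matrix (Fin n → Fin 4) (Fin n → Fin 4) ℂ :=
  diagonal (dvec q) * Pmat n σ * diagonal (dvec q)

lemma dsq (hq2 : q ^ 2 = 1) :
    diagonal (dvec q (n := n)) * diagonal (dvec q) = 1 := by
  rw [diagonal_mul_diagonal]
  have : (fun c : Fin n → Fin 4 => dvec q c * dvec q c) = fun _ => 1 := by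
    funext c
    rw [dvec, ← Finset.prod_mul_distrib]
    apply Finset.prod_eq_one
    intro i _
    rw [← pow_add]
    exact qpow_parity hq2 _ 0 (by omega)
  rw [this, diagonal_one]

lemma Pmat_mul (σ τ : Equiv.Perm (Fin n)) : Pmat n σ * Pmat n τ = Pmat n (σ * τ) := by
  ext r c
  rw [mul_apply]
  simp only [Pmat, of_apply]
  rw [Finset.sum_eq_single (r ∘ σ)]
  · rw [if_pos rfl, one_mul]
    rfl
  · intro m _ hm
    rw [if_neg hm, zero_mul]
  · intro h; exact absurd (Finset.mem_univ _) h

lemma Pmat_one : Pmat n 1 = 1 := by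
  ext r c
  simp only [Pmat, of_apply, Equiv.Perm.coe_one, Function.comp_id, one_apply, eq_comm]

lemma Mmat_mul (hq2 : q ^ 2 = 1) (σ τ : Equiv.Perm (Fin n)) :
    Mmat q n σ * Mmat q n τ = Mmat q n (σ * τ) := by
  simp only [Mmat, mul_assoc]
  rw [← mul_assoc (diagonal (dvec q)) (diagonal (dvec q)), dsq hq2, one_mul,
    ← mul_assoc (Pmat n σ), Pmat_mul]

lemma Mmat_one (hq2 : q ^ 2 = 1) : Mmat q n 1 = 1 := by
  rw [Mmat, Pmat_one, mul_one, dsq hq2]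



def rho (q : ℂ) (hq2 : q ^ 2 = 1) (n : ℕ) :
    Equiv.Perm (Fin n) →* (Matrix (Fin n → Fin 4) (Fin n → Fin 4) ℂ)ˣ :=
  MonoidHom.mk'
    (fun σ => ⟨Mmat q n σ, Mmat q n σ⁻¹,
      by rw [Mmat_mul hq2, mul_inv_cancel, Mmat_one hq2],
      by rw [Mmat_mul hq2, inv_mul_cancel, Mmat_one hq2]⟩)
    (fun σ τ => Units.ext (by simp [Mmat_mul hq2]))

@[simp] lemma rho_coe (hq2 : q ^ 2 = 1) (σ : Equiv.Perm (Fin n)) :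
    ((rho q hq2 n σ : (Matrix (Fin n → Fin 4) (Fin n → Fin 4) ℂ)ˣ) :
      Matrix (Fin n → Fin 4) (Fin n → Fin 4) ℂ) = Mmat q n σ := rfl

lemma Mmat_swap (hq2 : q ^ 2 = 1) (k : ℕ) (hk : k + 1 < n) :
    Mmat q n (Equiv.swap ⟨k, Nat.lt_of_succ_lt hk⟩ ⟨k + 1, hk⟩) = siteOp q n k hk := by
  set a : Fin n := ⟨k, Nat.lt_of_succ_lt hk⟩ with ha
  set b : Fin n := ⟨k + 1, hk⟩ with hb
  have hab : a ≠ b := by simp [ha, hb, Fin.ext_iff]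
  have hva : (a : ℕ) = k := rfl
  have hvb : (b : ℕ) = k + 1 := rfl
  ext r c
  have hentry : Mmat q n (Equiv.swap a b) r c =
      dvec q r * (if c = r ∘ ⇑(Equiv.swap a b) then 1 else 0) * dvec q c := by
    rw [Mmat, Matrix.mul_diagonal, Matrix.diagonal_mul]
    rfl
  have hcond : (c = r ∘ ⇑(Equiv.swap a b)) ↔
      ((∀ j : Fin n, (j : ℕ) ≠ k → (j : ℕ) ≠ k + 1 → r j = c j) ∧ r a = c b ∧ r b = c a) := by
    constructor
    · rintro rfl
      refine ⟨fun j hj1 hj2 => ?_, ?_, ?_⟩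
      · have hja : j ≠ a := fun e => hj1 (by rw [e])
        have hjb : j ≠ b := fun e => hj2 (by rw [e])
        show r j = r (Equiv.swap a b j)
        rw [Equiv.swap_apply_of_ne_of_ne hja hjb]
      · show r a = r (Equiv.swap a b b)
        rw [Equiv.swap_apply_right]
      · show r b = r (Equiv.swap a b a)
        rw [Equiv.swap_apply_left]
    · rintro ⟨h1, h2, h3⟩
      funext j
      show c j = r (Equiv.swap a b j)
      rcases eq_or_ne j a with rfl | hja
      · rw [Equiv.swap_apply_left]; exact h3.symm
      · rcases eq_or_ne j b with rfl | hjb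
        · rw [Equiv.swap_apply_right]; exact h2.symm
        · rw [Equiv.swap_apply_of_ne_of_ne hja hjb]
          exact (h1 j (fun e => hja (Fin.ext (e.trans hva.symm)))
            (fun e => hjb (Fin.ext (e.trans hvb.symm)))).symm
  rw [hentry, siteOp, of_apply]
  by_cases h : (∀ j : Fin n, (j : ℕ) ≠ k → (j : ℕ) ≠ k + 1 → r j = c j)
      ∧ r a = c b ∧ r b = c a
  · rw [if_pos (hcond.mpr h), if_pos h, mul_one]
    -- now the value computation
    rw [dvec, dvec, ← Finset.prod_mul_distrib]
    have hstep : ∀ i : Fin n, q ^ (wt (r i) * (i : ℕ)) * q ^ (wt (c i) * (i : ℕ))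
        = q ^ ((wt (r i) + wt (c i)) * (i : ℕ)) := by
      intro i; rw [← pow_add, add_mul]
    rw [Finset.prod_congr rfl (fun i _ => hstep i)]
    have hsub : ∏ i ∈ ({a, b} : Finset (Fin n)), q ^ ((wt (r i) + wt (c i)) * (i : ℕ))
        = ∏ i : Fin n, q ^ ((wt (r i) + wt (c i)) * (i : ℕ)) := by
      apply Finset.prod_subset (Finset.subset_univ _)
      intro x _ hx
      rw [Finset.mem_insert, Finset.mem_singleton] at hx
      push_neg at hx
      have hrc : r x = c x := h.1 x (fun e => hx.1 (Fin.ext (e.trans hva.symm)))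
        (fun e => hx.2 (Fin.ext (e.trans hvb.symm)))
      rw [hrc, qpow_parity hq2 _ 0
        (by rw [show (wt (c x) + wt (c x)) * (x : ℕ) = 2 * (wt (c x) * (x : ℕ)) by ring,
          Nat.mul_mod_right]), pow_zero]
    rw [← hsub, Finset.prod_pair hab, h.2.1, h.2.2, hva, hvb, ← pow_add]
    exact qpow_parity hq2 _ _
      (by rw [show (wt (c b) + wt (c a)) * k + (wt (c a) + wt (c b)) * (k + 1)
          = (wt (c a) + wt (c b)) + 2 * ((wt (c a) + wt (c b)) * k) by ring,
        Nat.add_mul_mod_self_left])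
  · rw [if_neg (fun hc => h (hcond.mp hc)), if_neg h, mul_zero, zero_mul]


instance permSMul {n : ℕ} : SMul (Equiv.Perm (Fin n)) (Fin n → Fin 4) :=
  ⟨fun σ c => c ∘ ⇑σ⁻¹⟩

lemma smul_def (σ : Equiv.Perm (Fin n)) (c : Fin n → Fin 4) : σ • c = c ∘ ⇑σ⁻¹ := rfl

instance permArrow {n : ℕ} : MulAction (Equiv.Perm (Fin n)) (Fin n → Fin 4) where
  one_smul c := by rw [smul_def]; funext i; simp
  mul_smul σ τ c := by
    rw [smul_def, smul_def, smul_def]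
    funext i
    simp

lemma smul_eq_iff (σ : Equiv.Perm (Fin n)) (c : Fin n → Fin 4) :
    σ • c = c ↔ c = c ∘ ⇑σ := by
  rw [smul_def]
  constructor
  · intro h
    funext i
    have := congrFun h (σ i)
    simpa using this
  · intro h
    funext i
    have := congrFun h (σ⁻¹ i)
    simpa using this

def toSym {n : ℕ} (c : Fin n → Fin 4) : Sym (Fin 4) n :=
  ⟨Multiset.map c Finset.univ.val, by simp⟩

lemma toSym_comp (c : Fin n → Fin 4) (σ : Equiv.Perm (Fin n)) :
    toSym (c ∘ ⇑σ) = toSym c := by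
  apply Subtype.ext
  show Multiset.map (c ∘ ⇑σ) Finset.univ.val = Multiset.map c Finset.univ.val
  rw [← Multiset.map_map, Multiset.map_univ_val_equiv]

lemma count_toSym (c : Fin n → Fin 4) (x : Fin 4) :
    Multiset.count x (toSym c).1 = Fintype.card {i // c i = x} := by
  rw [toSym, Multiset.count_map, Fintype.card_subtype]
  show Multiset.card _ = Multiset.card _
  congr 1
  exact Multiset.filter_congr (fun i _ => by simp [eq_comm])

lemma exists_perm_of_toSym_eq {c₁ c₂ : Fin n → Fin 4} (h : toSym c₁ = toSym c₂) :
    ∃ σ : Equiv.Perm (Fin n), c₂ = c₁ ∘ ⇑σ := by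
  have hcard : ∀ x : Fin 4, Fintype.card {i // c₂ i = x} = Fintype.card {i // c₁ i = x} := by
    intro x; rw [← count_toSym, ← count_toSym, h]
  let e : ∀ x : Fin 4, {i // c₂ i = x} ≃ {i // c₁ i = x} := fun x => Fintype.equivOfCardEq (hcard x)
  refine ⟨(Equiv.sigmaFiberEquiv c₂).symm.trans
    ((Equiv.sigmaCongrRight e).trans (Equiv.sigmaFiberEquiv c₁)), ?_⟩
  funext i
  exact ((e (c₂ i) ⟨i, rfl⟩).2).symm

lemma toSym_surjective {n : ℕ} : Function.Surjective (toSym (n := n)) := by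
  rintro ⟨m, hm⟩
  have hl : m.toList.length = n := by rw [Multiset.length_toList, hm]
  subst hl
  refine ⟨m.toList.get, ?_⟩
  apply Subtype.ext
  show Multiset.map m.toList.get Finset.univ.val = m
  rw [Fin.univ_val_map, List.ofFn_get, Multiset.coe_toList]

def orbitEquivSym (n : ℕ) :
    Quotient (MulAction.orbitRel (Equiv.Perm (Fin n)) (Fin n → Fin 4)) ≃ Sym (Fin 4) n := by
  refine Equiv.ofBijective (Quotient.lift toSym ?_) ⟨?_, ?_⟩
  · intro c₁ c₂ hc
    obtain ⟨σ, hσ⟩ := hc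
    rw [← hσ]
    show toSym (σ • c₂) = toSym c₂
    rw [smul_def, toSym_comp c₂ σ⁻¹]
  · intro x y
    induction x using Quotient.ind
    induction y using Quotient.ind
    rename_i c₁ c₂
    intro h
    obtain ⟨σ, hσ⟩ := exists_perm_of_toSym_eq (h : toSym c₁ = toSym c₂)
    apply Quotient.sound
    refine ⟨σ, ?_⟩
    show σ • c₂ = c₁
    rw [smul_def, hσ]
    funext i
    simp
  · intro s
    obtain ⟨c, hc⟩ := toSym_surjective s
    exact ⟨Quotient.mk _ c, hc⟩

lemma card_orbits (n : ℕ) :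
    Nat.card (Quotient (MulAction.orbitRel (Equiv.Perm (Fin n)) (Fin n → Fin 4)))
      = (n + 3).choose 3 := by
  rw [Nat.card_congr (orbitEquivSym n), Nat.card_eq_fintype_card, Sym.card_sym_eq_choose]
  have h4 : Fintype.card (Fin 4) + n - 1 = n + 3 := by simp; omega
  rw [h4]
  rw [show ((n+3).choose n) = ((n+3).choose (n+3-3)) from by congr 1]
  rw [Nat.choose_symm (by omega)]

lemma trace_Pmat (σ : Equiv.Perm (Fin n)) :
    trace (Pmat n σ) = (Nat.card {c : Fin n → Fin 4 // c = c ∘ ⇑σ} : ℂ) := by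
  rw [trace]
  have hdiag : ∀ c : Fin n → Fin 4, diag (Pmat n σ) c = if c = c ∘ ⇑σ then 1 else 0 := fun c => rfl
  rw [Finset.sum_congr rfl (fun c _ => hdiag c), Finset.sum_boole,
    Nat.card_eq_fintype_card, Fintype.card_subtype]

lemma trace_Mmat (hq2 : q ^ 2 = 1) (σ : Equiv.Perm (Fin n)) :
    trace (Mmat q n σ) = trace (Pmat n σ) := by
  rw [Mmat, trace_mul_comm, ← mul_assoc, dsq hq2, one_mul]

lemma sum_trace_Mmat (hq2 : q ^ 2 = 1) :
    ∑ σ : Equiv.Perm (Fin n), trace (Mmat q n σ)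
      = (((n + 3).choose 3 * n.factorial : ℕ) : ℂ) := by
  classical
  letI : ∀ σ : Equiv.Perm (Fin n), Fintype (MulAction.fixedBy (Fin n → Fin 4) σ) :=
    fun _ => Fintype.ofFinite _
  letI : Fintype (Quotient (MulAction.orbitRel (Equiv.Perm (Fin n)) (Fin n → Fin 4))) :=
    Fintype.ofFinite _
  have hb := MulAction.sum_card_fixedBy_eq_card_orbits_mul_card_group
    (Equiv.Perm (Fin n)) (Fin n → Fin 4)
  have hcard : ∀ σ : Equiv.Perm (Fin n),
      Nat.card {c : Fin n → Fin 4 // c = c ∘ ⇑σ}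
        = Fintype.card (MulAction.fixedBy (Fin n → Fin 4) σ) := by
    intro σ
    rw [← Nat.card_eq_fintype_card]
    exact Nat.card_congr (Equiv.subtypeEquivRight fun c => by
      rw [MulAction.mem_fixedBy, smul_eq_iff]).symm
  have h1 : ∑ σ : Equiv.Perm (Fin n), trace (Mmat q n σ)
      = ((∑ σ : Equiv.Perm (Fin n),
          Fintype.card (MulAction.fixedBy (Fin n → Fin 4) σ) : ℕ) : ℂ) := by
    rw [Nat.cast_sum]
    exact Finset.sum_congr rfl fun σ _ => by
      rw [trace_Mmat hq2, trace_Pmat, hcard]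
  rw [h1, hb]
  congr 1
  rw [← Nat.card_eq_fintype_card, card_orbits, Fintype.card_perm, Fintype.card_fin]

lemma choose_aux (n : ℕ) : (n + 1) * (n + 2) * (n + 3) / 6 = (n + 3).choose 3 := by
  have h := Nat.choose_mul_factorial_mul_factorial (show 3 ≤ n + 3 by omega)
  have hfac : (3 : ℕ).factorial = 6 := rfl
  have hsub : n + 3 - 3 = n := by omega
  rw [hfac, hsub] at h
  have hfac3 : (n + 3).factorial = (n + 1) * (n + 2) * (n + 3) * n.factorial := by
    rw [Nat.factorial_succ, Nat.factorial_succ, Nat.factorial_succ]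
    ring
  rw [hfac3] at h
  have h2 : (n + 3).choose 3 * 6 = (n + 1) * (n + 2) * (n + 3) :=
    Nat.eq_of_mul_eq_mul_right n.factorial_pos (by rw [← h])
  omega

lemma hom_ext {M : Type*} [Monoid M] {m : ℕ}
    (ρ₁ ρ₂ : Equiv.Perm (Fin (m + 1)) →* M)
    (h : ∀ i : Fin m, ρ₁ (Equiv.swap i.castSucc i.succ) = ρ₂ (Equiv.swap i.castSucc i.succ)) :
    ρ₁ = ρ₂ :=
  MonoidHom.eq_of_eqOn_denseM (Equiv.Perm.mclosure_swap_castSucc_succ m)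
    (by rintro x ⟨i, rfl⟩; exact h i)

lemma Tsq (hq2 : q ^ 2 = 1) :
    (∑ σ : Equiv.Perm (Fin n), Mmat q n σ) * (∑ σ : Equiv.Perm (Fin n), Mmat q n σ)
      = (n.factorial : ℂ) • ∑ σ : Equiv.Perm (Fin n), Mmat q n σ := by
  rw [Finset.sum_mul_sum]
  have hinner : ∀ σ : Equiv.Perm (Fin n),
      ∑ τ : Equiv.Perm (Fin n), Mmat q n σ * Mmat q n τ
        = ∑ τ : Equiv.Perm (Fin n), Mmat q n τ := by
    intro σ
    rw [Finset.sum_congr rfl (fun τ _ => Mmat_mul hq2 σ τ)]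
    exact Fintype.sum_equiv (Equiv.mulLeft σ) _ _ (fun τ => rfl)
  rw [Finset.sum_congr rfl (fun σ _ => hinner σ), Finset.sum_const,
    Finset.card_univ, Fintype.card_perm, Fintype.card_fin,
    Nat.cast_smul_eq_nsmul]

lemma symm_idem (hq2 : q ^ 2 = 1) :
    ((n.factorial : ℂ)⁻¹ • ∑ σ : Equiv.Perm (Fin n), Mmat q n σ) *
      ((n.factorial : ℂ)⁻¹ • ∑ σ : Equiv.Perm (Fin n), Mmat q n σ)
      = (n.factorial : ℂ)⁻¹ • ∑ σ : Equiv.Perm (Fin n), Mmat q n σ := by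
  have hf : (n.factorial : ℂ) ≠ 0 := Nat.cast_ne_zero.2 n.factorial_ne_zero
  rw [smul_mul_assoc, mul_smul_comm, Tsq hq2, smul_smul, smul_smul]
  congr 1
  field_simp

lemma trace_symm (hq2 : q ^ 2 = 1) :
    trace ((n.factorial : ℂ)⁻¹ • ∑ σ : Equiv.Perm (Fin n), Mmat q n σ)
      = (((n + 1) * (n + 2) * (n + 3) / 6 : ℕ) : ℂ) := by
  have hf : (n.factorial : ℂ) ≠ 0 := Nat.cast_ne_zero.2 n.factorial_ne_zero
  rw [trace_smul, trace_sum, sum_trace_Mmat hq2, choose_aux, Nat.cast_mul,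
    smul_eq_mul]
  field_simp

lemma rank_eq_trace_of_idem {N : Type*} [Fintype N] [DecidableEq N] (A : Matrix N N ℂ)
    (h : A * A = A) : (A.rank : ℂ) = trace A := by
  have hcomp : A.mulVecLin.comp A.mulVecLin = A.mulVecLin := by
    rw [← Matrix.mulVecLin_mul, h]
  have hproj : LinearMap.IsProj (LinearMap.range A.mulVecLin) A.mulVecLin := by
    constructor
    · intro x
      exact LinearMap.mem_range_self _ x
    · rintro x ⟨y, rfl⟩
      exact congrFun (congrArg DFunLike.coe hcomp) y
  have ht := hproj.trace
  rw [LinearMap.trace_eq_matrix_trace ℂ (Pi.basisFun ℂ N),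
    LinearMap.toMatrix_eq_toMatrix', ← Matrix.toLin'_apply', LinearMap.toMatrix'_toLin'] at ht
  rw [Matrix.rank, ← Matrix.toLin'_apply']
  exact ht.symm

end SymAux

/-- For `q = ±1` and `n ≥ 1` there is a unique group homomorphism `ρ_n` from the
symmetric group `S_n` to `GL((ℂ⁴)^{⊗n})` sending each adjacent transposition
`(k, k+1)` to `1^{⊗(k)} ⊗ R'' ⊗ 1^{⊗(n-k-2)}`; moreover the symmetrizer
`S = (1/n!) Σ_{π ∈ S_n} ρ_n(π)` is an idempotent whose trace and rank both equal
`(n+1)(n+2)(n+3)/6`, the number of monomials of degree `n` in 4 commuting variables. -/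


theorem symmetrizer_trace (q : ℂ) (hq : q = 1 ∨ q = -1) (n : ℕ) (hn : 1 ≤ n) :
    (∃! ρ : Equiv.Perm (Fin n) →* (Matrix (Fin n → Fin 4) (Fin n → Fin 4) ℂ)ˣ,
      ∀ (k : ℕ) (hk : k + 1 < n),
        (↑(ρ (Equiv.swap ⟨k, Nat.lt_of_succ_lt hk⟩ ⟨k + 1, hk⟩)) :
            Matrix (Fin n → Fin 4) (Fin n → Fin 4) ℂ)
          = siteOp q n k hk) ∧
    (∀ ρ : Equiv.Perm (Fin n) →* (Matrix (Fin n → Fin 4) (Fin n → Fin 4) ℂ)ˣ,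
      (∀ (k : ℕ) (hk : k + 1 < n),
        (↑(ρ (Equiv.swap ⟨k, Nat.lt_of_succ_lt hk⟩ ⟨k + 1, hk⟩)) :
            Matrix (Fin n → Fin 4) (Fin n → Fin 4) ℂ)
          = siteOp q n k hk) →
      ((n.factorial : ℂ)⁻¹ • ∑ π : Equiv.Perm (Fin n),
          (↑(ρ π) : Matrix (Fin n → Fin 4) (Fin n → Fin 4) ℂ)) *
        ((n.factorial : ℂ)⁻¹ • ∑ π : Equiv.Perm (Fin n),
          (↑(ρ π) : Matrix (Fin n → Fin 4) (Fin n → Fin 4) ℂ))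
        = (n.factorial : ℂ)⁻¹ • ∑ π : Equiv.Perm (Fin n),
          (↑(ρ π) : Matrix (Fin n → Fin 4) (Fin n → Fin 4) ℂ) ∧
      Matrix.trace ((n.factorial : ℂ)⁻¹ • ∑ π : Equiv.Perm (Fin n),
          (↑(ρ π) : Matrix (Fin n → Fin 4) (Fin n → Fin 4) ℂ))
        = (((n + 1) * (n + 2) * (n + 3) / 6 : ℕ) : ℂ) ∧
      Matrix.rank ((n.factorial : ℂ)⁻¹ • ∑ π : Equiv.Perm (Fin n),
          (↑(ρ π) : Matrix (Fin n → Fin 4) (Fin n → Fin 4) ℂ))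
        = (n + 1) * (n + 2) * (n + 3) / 6) := by
  have hq2 : q ^ 2 = 1 := by rcases hq with rfl | rfl <;> norm_num
  obtain ⟨m, rfl⟩ : ∃ m, n = m + 1 := ⟨n - 1, by omega⟩
  have huniq : ∀ ρ' : Equiv.Perm (Fin (m + 1)) →*
      (Matrix (Fin (m + 1) → Fin 4) (Fin (m + 1) → Fin 4) ℂ)ˣ,
      (∀ (k : ℕ) (hk : k + 1 < m + 1),
        (↑(ρ' (Equiv.swap ⟨k, Nat.lt_of_succ_lt hk⟩ ⟨k + 1, hk⟩)) :
            Matrix (Fin (m + 1) → Fin 4) (Fin (m + 1) → Fin 4) ℂ)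
          = siteOp q (m + 1) k hk) → ρ' = SymAux.rho q hq2 (m + 1) := by
    intro ρ' hρ'
    apply SymAux.hom_ext
    intro i
    apply Units.ext
    have hk : (i : ℕ) + 1 < m + 1 := by omega
    have hswap : Equiv.swap i.castSucc i.succ
        = Equiv.swap (⟨(i : ℕ), Nat.lt_of_succ_lt hk⟩ : Fin (m + 1)) ⟨(i : ℕ) + 1, hk⟩ := by
      rfl
    rw [hswap, hρ' (i : ℕ) hk, SymAux.rho_coe, SymAux.Mmat_swap hq2]
  refine ⟨⟨SymAux.rho q hq2 (m + 1), fun k hk => ?_, huniq⟩, fun ρ' hρ' => ?_⟩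
  · rw [SymAux.rho_coe, SymAux.Mmat_swap hq2 k hk]
  · have hρeq := huniq ρ' hρ'
    subst hρeq
    simp only [SymAux.rho_coe]
    refine ⟨SymAux.symm_idem hq2, SymAux.trace_symm hq2, ?_⟩
    have hr := SymAux.rank_eq_trace_of_idem _ (SymAux.symm_idem hq2 (n := m + 1))
    rw [SymAux.trace_symm hq2] at hr
    exact_mod_cast hr
end
end

section
/- Let E₂ = e₁⊗e₂ - e₂⊗e₁ + e₁⊗e₁ = (1,1,-1,0)ᵀ ∈ ℂ⁴. For U ∈ GL(2,ℂ) and k ∈ ℂ∖{0}, the equation (U⁻¹ ⊗ U⁻¹)E₂ = k⁻¹E₂ holds if and only if U = [[m,x],[0,m]] for some m ∈ ℂ∖{0} and x ∈ ℂ, in which case k = m². -/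
open Matrix Complex

noncomputable section

/-- E₂ = e₁⊗e₂ - e₂⊗e₁ + e₁⊗e₁ = (1,1,-1,0)ᵀ as a column vector. -/
def E2col : Matrix (Fin 4) (Fin 1) ℂ := !![1; 1; -1; 0]

/-!
Write `V = U⁻¹`. The four coordinates of `(V ⊗ V)E₂` are `V₀₀²`, `V₀₀V₁₁ - V₀₁V₁₀`,
`-(V₀₀V₁₁ - V₀₁V₁₀)` and `V₁₀²`, so `(V ⊗ V)E₂ = k⁻¹E₂` forces `V₁₀ = 0`, `V₀₀² = k⁻¹` and
`V₀₀V₁₁ = k⁻¹`, hence `V₁₁ = V₀₀`. Then `det V = V₀₀² ≠ 0`, and since the matrices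
`[[a, b], [0, a]]` with `a ≠ 0` form a group, `U = V⁻¹` has the same shape, with diagonal entry
`m = V₀₀⁻¹` and `k = m²`.
-/

lemma kron_mul_E2col (A B : Matrix (Fin 2) (Fin 2) ℂ) :
    kron A B * E2col =
      !![A 0 0 * B 0 0 + A 0 0 * B 0 1 - A 0 1 * B 0 0;
         A 0 0 * B 1 0 + A 0 0 * B 1 1 - A 0 1 * B 1 0;
         A 1 0 * B 0 0 + A 1 0 * B 0 1 - A 1 1 * B 0 0;
         A 1 0 * B 1 0 + A 1 0 * B 1 1 - A 1 1 * B 1 0] := by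
  ext i j
  fin_cases i <;> fin_cases j <;>
    simp [kron, E2col, mul_apply, Fin.sum_univ_four, Fin.divNat, Fin.modNat] <;> ring

lemma kron_self_mul_E2col_eq_smul_iff {V : Matrix (Fin 2) (Fin 2) ℂ} {s : ℂ} (hs : s ≠ 0) :
    kron V V * E2col = s • E2col ↔ ∃ a b : ℂ, V = !![a, b; 0, a] ∧ a ^ 2 = s := by
  rw [kron_mul_E2col]
  constructor
  · intro h
    have h0 := congrFun (congrFun h 0) 0
    have h1 := congrFun (congrFun h 1) 0
    have h3 := congrFun (congrFun h 3) 0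
    simp only [E2col, of_apply, cons_val', cons_val_fin_one, cons_val_zero, cons_val_one, cons_val,
      Matrix.smul_apply, smul_eq_mul, mul_one, mul_zero] at h0 h1 h3
    have hsq : V 0 0 ^ 2 = s := by linear_combination h0
    have hc : V 1 0 = 0 := pow_eq_zero_iff (n := 2) two_ne_zero |>.mp (by linear_combination h3)
    have ha : V 0 0 ≠ 0 := fun ha => hs (by rw [← hsq, ha, zero_pow two_ne_zero])
    have hd : V 1 1 = V 0 0 :=
      mul_left_cancel₀ ha (by rw [hc] at h1; linear_combination h1 - hsq)
    refine ⟨V 0 0, V 0 1, ?_, hsq⟩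
    conv_lhs => rw [eta_fin_two V]
    rw [hc, hd]
  · rintro ⟨a, b, rfl, rfl⟩
    ext i j
    fin_cases i <;> fin_cases j <;> simp [E2col] <;> ring

lemma inv_fin_two_upper_of_ne_zero {m : ℂ} (hm : m ≠ 0) (x : ℂ) :
    (!![m, x; 0, m])⁻¹ = !![m⁻¹, -x / m ^ 2; 0, m⁻¹] := by
  refine inv_eq_right_inv ?_
  have h01 : m * (-x / m ^ 2) + x * m⁻¹ = 0 := by field_simp; ring
  simp [one_fin_two, hm, h01]

theorem E2_stabilizer_general (U : Matrix (Fin 2) (Fin 2) ℂ) (k : ℂ) (hk : k ≠ 0) :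
    kron U⁻¹ U⁻¹ * E2col = k⁻¹ • E2col ↔
      ∃ m x : ℂ, m ≠ 0 ∧ U = !![m, x; 0, m] ∧ k = m ^ 2 := by
  rw [kron_self_mul_E2col_eq_smul_iff (inv_ne_zero hk)]
  constructor
  · rintro ⟨a, b, hV, hak⟩
    have ha : a ≠ 0 := ne_zero_pow two_ne_zero (hak ▸ inv_ne_zero hk)
    have hdet : IsUnit U.det := by
      rw [← isUnit_nonsing_inv_det_iff, hV, det_fin_two_of]; simpa using ha
    refine ⟨a⁻¹, -b / a ^ 2, inv_ne_zero ha, ?_, by rw [inv_pow, hak, inv_inv]⟩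
    rw [← nonsing_inv_nonsing_inv U hdet, hV, inv_fin_two_upper_of_ne_zero ha]
  · rintro ⟨m, x, hm, rfl, rfl⟩
    exact ⟨m⁻¹, -x / m ^ 2, inv_fin_two_upper_of_ne_zero hm x, inv_pow m 2⟩

/-- For invertible `U` and `k ≠ 0`, `(U⁻¹ ⊗ U⁻¹)E₂ = k⁻¹E₂` holds iff
`U = [[m,x],[0,m]]` with `m ≠ 0`, in which case `k = m²`. -/
theorem E2_stabilizer (U : Matrix (Fin 2) (Fin 2) ℂ) (hU : IsUnit U) (k : ℂ) (hk : k ≠ 0) :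
    kron U⁻¹ U⁻¹ * E2col = k⁻¹ • E2col ↔
      ∃ m x : ℂ, m ≠ 0 ∧ U = !![m, x; 0, m] ∧ k = m ^ 2 :=
  E2_stabilizer_general U k hk
end
end
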